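/- arXiv:2107.12624 — 7 statements merged into one kernel-verified Lean document; each statement's English description precedes it below -/
import Mathlib

section
/- Let P ⊆ ℝ^k be a nonempty polytope and let E be its set of extreme points (E is finite). Then a point γ ∈ ℝ^k belongs to the relative interior of P if and only if there exists a map λ : E → [0,1] such that Σ_{e∈E} λ(e) = 1, λ(e) > 0 for every e ∈ E, and γ = Σ_{e∈E} λ(e)·e. -/
/-!
If `x = ∑ wᵢ vᵢ` with all `wᵢ > 0`, homogenize the points to `(vᵢ, 1)`, so that affine
combinations become the image of a linear map; the open mapping theorem then gives every point of
the affine span near `x` weights close to `w`, hence still positive. Conversely, a relative-interior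
point `x` can be pushed slightly beyond itself, away from the barycentre `b`, without leaving the
hull; averaging that point back with `b` writes `x` with strictly positive weights. A polytope is
the convex hull of its finitely many extreme points (Krein–Milman), so both directions apply to it.
-/

open Set Filter Topology

theorem mem_intrinsicInterior_iff_mem_nhdsWithin {𝕜 V P : Type*} [Ring 𝕜] [AddCommGroup V]
    [Module 𝕜 V] [TopologicalSpace P] [AddTorsor V P] {s : Set P} {x : P} :
    x ∈ intrinsicInterior 𝕜 s ↔ x ∈ affineSpan 𝕜 s ∧ s ∈ 𝓝[affineSpan 𝕜 s] x := by
  constructor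
  · rintro ⟨y, hy, rfl⟩
    exact ⟨y.2, preimage_coe_mem_nhds_subtype.1 (mem_interior_iff_mem_nhds.1 hy)⟩
  · rintro ⟨hx, hs⟩
    exact ⟨⟨x, hx⟩, mem_interior_iff_mem_nhds.2 (preimage_coe_mem_nhds_subtype.2 hs), rfl⟩

theorem exists_pos_add_smul_sub_mem_of_mem_intrinsicInterior {V : Type*} [AddCommGroup V]
    [Module ℝ V] [TopologicalSpace V] [IsTopologicalAddGroup V] [ContinuousSMul ℝ V]
    {s : Set V} {x y : V} (hx : x ∈ intrinsicInterior ℝ s) (hy : y ∈ s) :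
    ∃ t : ℝ, 0 < t ∧ x + t • (x - y) ∈ s := by
  obtain ⟨hxA, hs⟩ := mem_intrinsicInterior_iff_mem_nhdsWithin.1 hx
  have hline : Tendsto (fun t : ℝ => x + t • (x - y)) (𝓝 0) (𝓝[affineSpan ℝ s] x) := by
    refine tendsto_nhdsWithin_iff.2 ⟨?_, Eventually.of_forall fun t => ?_⟩
    · simpa using ((continuous_id.smul continuous_const).const_add x).tendsto (0 : ℝ)
    · simpa [add_comm] using
        AffineSubspace.smul_vsub_vadd_mem _ t hxA (subset_affineSpan ℝ s hy) hxA
  have hsmall : ∀ᶠ t in 𝓝[>] (0 : ℝ), x + t • (x - y) ∈ s := nhdsWithin_le_nhds (hline hs)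
  exact ((eventually_mem_nhdsWithin (a := (0 : ℝ)) (s := Ioi 0)).and hsmall).exists

theorem LinearMap.exists_preimage_norm_le_of_mem_range {𝕜 E F : Type*}
    [NontriviallyNormedField 𝕜] [CompleteSpace 𝕜] [NormedAddCommGroup E] [NormedSpace 𝕜 E]
    [FiniteDimensional 𝕜 E] [NormedAddCommGroup F] [NormedSpace 𝕜 F] (f : E →ₗ[𝕜] F) :
    ∃ C > 0, ∀ y ∈ range f, ∃ x, f x = y ∧ ‖x‖ ≤ C * ‖y‖ := by
  have := FiniteDimensional.complete 𝕜 E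
  have := FiniteDimensional.complete 𝕜 (range f)
  obtain ⟨C, hC, hpre⟩ := (LinearMap.toContinuousLinearMap f.rangeRestrict).exists_preimage_norm_le
    f.surjective_rangeRestrict
  refine ⟨C, hC, fun y hy => ?_⟩
  obtain ⟨x, hx, hxC⟩ := hpre ⟨y, hy⟩
  exact ⟨x, congrArg Subtype.val hx, hxC⟩

theorem sum_smul_mem_intrinsicInterior_convexHull {ι V : Type*} [Fintype ι]
    [NormedAddCommGroup V] [NormedSpace ℝ V] (v : ι → V) {w : ι → ℝ} (hw₀ : ∀ i, 0 < w i)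
    (hw₁ : ∑ i, w i = 1) : ∑ i, w i • v i ∈ intrinsicInterior ℝ (convexHull ℝ (range v)) := by
  have hmem : ∀ u : ι → ℝ, (∀ i, 0 ≤ u i) → ∑ i, u i = 1 →
      ∑ i, u i • v i ∈ convexHull ℝ (range v) := fun u hu₀ hu₁ =>
    (convex_convexHull ℝ _).sum_mem (fun i _ => hu₀ i) hu₁
      fun i _ => subset_convexHull ℝ _ (mem_range_self i)
  have : Nonempty ι := by
    by_contra h
    simp [not_nonempty_iff.1 h] at hw₁
  obtain ⟨i₀, hi₀⟩ := Finite.exists_min w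
  let T : (ι → ℝ) →ₗ[ℝ] V × ℝ := Fintype.linearCombination ℝ fun i => (v i, (1 : ℝ))
  have hT : ∀ c, T c = (∑ i, c i • v i, ∑ i, c i) := fun c => by
    ext <;> simp [T, Fintype.linearCombination_apply, Prod.fst_sum, Prod.snd_sum]
  obtain ⟨C, hC, hpre⟩ := T.exists_preimage_norm_le_of_mem_range
  refine mem_intrinsicInterior_iff_mem_nhdsWithin.2
    ⟨subset_affineSpan ℝ _ (hmem w (fun i => (hw₀ i).le) hw₁), ?_⟩
  rw [affineSpan_convexHull, Metric.mem_nhdsWithin_iff]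
  refine ⟨w i₀ / C, div_pos (hw₀ i₀) hC, ?_⟩
  rintro y ⟨hyx, hyA⟩
  obtain ⟨u, hu₁, rfl⟩ := eq_affineCombination_of_mem_affineSpan_of_fintype hyA
  rw [Finset.affineCombination_eq_linear_combination _ _ _ hu₁] at hyx ⊢
  obtain ⟨c, hc, hcC⟩ := hpre (∑ i, u i • v i - ∑ i, w i • v i, 0)
    ⟨u - w, by simp [hT, sub_smul, hu₁, hw₁]⟩
  rw [hT, Prod.mk.injEq] at hc
  have hc_lt : ‖c‖ < w i₀ := calc
    ‖c‖ ≤ C * ‖∑ i, u i • v i - ∑ i, w i • v i‖ := by simpa using hcC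
    _ < C * (w i₀ / C) := by gcongr; rwa [← dist_eq_norm, ← Metric.mem_ball]
    _ = w i₀ := mul_div_cancel₀ _ hC.ne'
  have hwc : ∀ i, 0 ≤ w i + c i := fun i => by
    have := (abs_le.1 ((norm_le_pi_norm c i).trans hc_lt.le)).1
    linarith [hi₀ i]
  convert hmem (w + c) hwc (by simp [Finset.sum_add_distrib, hw₁, hc.2]) using 1
  simp [add_smul, Finset.sum_add_distrib, hc.1]

theorem Finset.exists_pos_of_mem_intrinsicInterior_convexHull {V : Type*} [AddCommGroup V]
    [Module ℝ V] [TopologicalSpace V] [IsTopologicalAddGroup V] [ContinuousSMul ℝ V]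
    {s : Finset V} {x : V} (hx : x ∈ intrinsicInterior ℝ (convexHull ℝ (s : Set V))) :
    ∃ w : V → ℝ, (∀ e ∈ s, 0 < w e) ∧ ∑ e ∈ s, w e = 1 ∧ ∑ e ∈ s, w e • e = x := by
  have hs : s.Nonempty := by
    by_contra h
    simp [Finset.not_nonempty_iff_eq_empty.1 h] at hx
  have hcard : (s.card : ℝ) * (s.card : ℝ)⁻¹ = 1 := mul_inv_cancel₀ (by simpa using hs.ne_empty)
  have hb : ∑ e ∈ s, (s.card : ℝ)⁻¹ • e ∈ convexHull ℝ (s : Set V) :=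
    Finset.mem_convexHull'.2 ⟨fun _ => (s.card : ℝ)⁻¹, fun _ _ => by positivity, by simpa, rfl⟩
  obtain ⟨t, ht, hz⟩ := exists_pos_add_smul_sub_mem_of_mem_intrinsicInterior hx hb
  obtain ⟨μ, hμ₀, hμ₁, hμz⟩ := Finset.mem_convexHull'.1 hz
  refine ⟨fun e => (1 + t)⁻¹ * (μ e + t * (s.card : ℝ)⁻¹), fun e he => by
    have := hμ₀ e he; positivity, ?_, ?_⟩
  · rw [← Finset.mul_sum, Finset.sum_add_distrib, hμ₁, Finset.sum_const, nsmul_eq_mul,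
      mul_left_comm, hcard, mul_one, inv_mul_cancel₀ (by positivity)]
  · simp only [mul_smul, add_smul, Finset.sum_add_distrib, ← Finset.smul_sum, hμz]
    rw [inv_smul_eq_iff₀ (by positivity)]
    module

theorem Finset.mem_intrinsicInterior_convexHull_iff {V : Type*} [NormedAddCommGroup V]
    [NormedSpace ℝ V] {s : Finset V} {x : V} :
    x ∈ intrinsicInterior ℝ (convexHull ℝ (s : Set V)) ↔
      ∃ w : V → ℝ, (∀ e ∈ s, 0 < w e) ∧ ∑ e ∈ s, w e = 1 ∧ ∑ e ∈ s, w e • e = x := by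
  refine ⟨exists_pos_of_mem_intrinsicInterior_convexHull, ?_⟩
  rintro ⟨w, hw₀, hw₁, rfl⟩
  have := sum_smul_mem_intrinsicInterior_convexHull ((↑) : s → V) (w := fun e => w e)
    (fun e => hw₀ e e.2) (by rwa [Finset.sum_coe_sort s w])
  rwa [Finset.sum_coe_sort s fun e => w e • e, Subtype.range_coe] at this

theorem Finset.convexHull_extremePoints_convexHull {V : Type*} [NormedAddCommGroup V]
    [NormedSpace ℝ V] (t : Finset V) :
    convexHull ℝ (extremePoints ℝ (convexHull ℝ (t : Set V))) = convexHull ℝ t := by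
  have hfin := t.finite_toSet.subset (extremePoints_convexHull_subset (𝕜 := ℝ))
  rw [← (hfin.isClosed_convexHull ℝ).closure_eq]
  exact closure_convexHull_extremePoints (t.finite_toSet.isCompact_convexHull ℝ)
    (convex_convexHull ℝ _)

theorem stmt2_general (k : ℕ) (P : Set (Fin k → ℝ))
    (hP : ∃ t : Finset (Fin k → ℝ), P = convexHull ℝ ↑t) :
    (Set.extremePoints ℝ P).Finite ∧
    ∀ γ : Fin k → ℝ, γ ∈ intrinsicInterior ℝ P ↔
      ∃ lam : (Fin k → ℝ) → ℝ,
        (∀ e ∈ Set.extremePoints ℝ P, 0 < lam e ∧ lam e ≤ 1) ∧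
        (∑ᶠ e ∈ Set.extremePoints ℝ P, lam e) = 1 ∧
        γ = ∑ᶠ e ∈ Set.extremePoints ℝ P, lam e • e := by
  obtain ⟨t, rfl⟩ := hP
  have hfin : (extremePoints ℝ (convexHull ℝ (t : Set (Fin k → ℝ)))).Finite :=
    t.finite_toSet.subset extremePoints_convexHull_subset
  refine ⟨hfin, fun γ => ?_⟩
  set E := hfin.toFinset
  have hE : ↑E = extremePoints ℝ (convexHull ℝ (t : Set (Fin k → ℝ))) := hfin.coe_toFinset
  have hhull : convexHull ℝ (t : Set (Fin k → ℝ)) = convexHull ℝ ↑E := by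
    rw [hE, t.convexHull_extremePoints_convexHull]
  rw [← hE, hhull, Finset.mem_intrinsicInterior_convexHull_iff]
  simp only [finsum_mem_coe_finset, eq_comm (a := γ)]
  refine exists_congr fun lam => and_congr_left fun ⟨hsum, _⟩ =>
    ⟨fun hpos e he => ⟨hpos e he, ?_⟩, fun hpos e he => (hpos e he).1⟩
  exact hsum ▸ Finset.single_le_sum (fun i hi => (hpos i hi).le) he

theorem stmt2 (k : ℕ) (P : Set (Fin k → ℝ))
    (hP : ∃ t : Finset (Fin k → ℝ), P = convexHull ℝ ↑t) (hne : P.Nonempty) :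
    (Set.extremePoints ℝ P).Finite ∧
    ∀ γ : Fin k → ℝ, γ ∈ intrinsicInterior ℝ P ↔
      ∃ lam : (Fin k → ℝ) → ℝ,
        (∀ e ∈ Set.extremePoints ℝ P, 0 < lam e ∧ lam e ≤ 1) ∧
        (∑ᶠ e ∈ Set.extremePoints ℝ P, lam e) = 1 ∧
        γ = ∑ᶠ e ∈ Set.extremePoints ℝ P, lam e • e :=
  stmt2_general k P hP
end

section
/- Let f_1, …, f_k be McNaughton functions on [0,1]^n. Then the set of strictly coherent books on f_1, …, f_k, regarded as a subset of ℝ^k via β ↦ (β_1,…,β_k), equals the relative interior of the set of coherent books on f_1, …, f_k. -/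
/-!
With `F x = (f₁ x, …, fₖ x)`, the stakes `σ` act on books through the functional `σ ⬝ᵥ ·`, and
every linear functional on `ℝ^k` arises this way. Coherence of `β` then says that no functional
strictly separates `β` from the compact set `F '' [0,1]^n`; by Hahn–Banach this means that `β`
lies in its closed convex hull `K`. Strict coherence says that no functional that is nonconstant
on `K` attains its maximum over `K` at `β`. A point of a convex set has this property exactly when
it lies in the relative interior: from such a point one can move a little beyond it away from any
other point of the set, and at a point of the relative boundary there is a supporting hyperplane
inside the affine span.
-/

open Set MeasureTheory

/-- The unit cube `[0,1]^n` in `ℝ^n`. -/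
def cube (n : ℕ) : Set (Fin n → ℝ) := Set.Icc 0 1

/-- `f` is a McNaughton function on `[0,1]^n`: continuous on the cube, `[0,1]`-valued there,
and piecewise affine with integer coefficients. -/
def IsMcNaughton (n : ℕ) (f : (Fin n → ℝ) → ℝ) : Prop :=
  ContinuousOn f (cube n) ∧
  (∀ x ∈ cube n, f x ∈ Set.Icc (0 : ℝ) 1) ∧
  ∃ (m : ℕ) (a : Fin m → Fin n → ℤ) (b : Fin m → ℤ),
    ∀ x ∈ cube n, ∃ j : Fin m, f x = (b j : ℝ) + ∑ i, (a j i : ℝ) * x i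

/-- The book `β` on `f 0, …, f (k-1)` is coherent: for every choice of stakes `σ`,
the bookmaker's balance is nonnegative under some valuation. -/
def Coherent (n k : ℕ) (f : Fin k → (Fin n → ℝ) → ℝ) (β : Fin k → ℝ) : Prop :=
  ∀ σ : Fin k → ℝ, ∃ x ∈ cube n, 0 ≤ ∑ i, σ i * (β i - f i x)

/-- The book `β` on `f 0, …, f (k-1)` is strictly coherent: every possibility of loss
for the bookmaker is paired by a possibility of gain. -/
def StrictlyCoherent (n k : ℕ) (f : Fin k → (Fin n → ℝ) → ℝ) (β : Fin k → ℝ) : Prop :=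
  ∀ σ : Fin k → ℝ, (∃ x ∈ cube n, ∑ i, σ i * (β i - f i x) < 0) →
    ∃ x' ∈ cube n, 0 < ∑ i, σ i * (β i - f i x')

section IntrinsicInterior

variable {E : Type*} [NormedAddCommGroup E] [NormedSpace ℝ E] {s : Set E} {β : E}

theorem intrinsicInterior_eq_image_interior_preimage_add (hβ : β ∈ s) :
    intrinsicInterior ℝ s =
      (fun w : (affineSpan ℝ s).direction => (w : E) + β) ''
        interior ((fun w : (affineSpan ℝ s).direction => (w : E) + β) ⁻¹' s) := by
  let p : affineSpan ℝ s := ⟨β, subset_affineSpan ℝ s hβ⟩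
  have : Nonempty (affineSpan ℝ s) := ⟨p⟩
  exact (image_interior_preimage_comp _
    (AffineIsometryEquiv.vaddConst ℝ p).toHomeomorph.isHomeomorph _ s).symm

theorem zero_mem_interior_preimage_add_iff (hβ : β ∈ s) :
    (0 : (affineSpan ℝ s).direction) ∈
        interior ((fun w : (affineSpan ℝ s).direction => (w : E) + β) ⁻¹' s) ↔
      β ∈ intrinsicInterior ℝ s := by
  rw [intrinsicInterior_eq_image_interior_preimage_add hβ]
  refine ⟨fun h => ⟨0, h, zero_add β⟩, ?_⟩
  rintro ⟨w, hw, hwβ⟩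
  obtain rfl : w = 0 := Subtype.ext (add_eq_right.1 hwβ)
  exact hw

theorem exists_pos_lineMap_neg_mem_of_mem_intrinsicInterior {y : E}
    (hβ : β ∈ intrinsicInterior ℝ s) (hy : y ∈ s) :
    ∃ t : ℝ, 0 < t ∧ AffineMap.lineMap β y (-t) ∈ s := by
  have hβs := intrinsicInterior_subset hβ
  rw [← zero_mem_interior_preimage_add_iff hβs, mem_interior_iff_mem_nhds] at hβ
  let d : (affineSpan ℝ s).direction :=
    ⟨β - y, AffineSubspace.vsub_mem_direction (subset_affineSpan ℝ s hβs)
      (subset_affineSpan ℝ s hy)⟩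
  have hsmul : ∀ᶠ t : ℝ in nhds 0, t • d ∈ _ :=
    ((continuous_id.smul continuous_const).tendsto' 0 0 (zero_smul ℝ d)).eventually_mem hβ
  obtain ⟨t, hts, ht⟩ := ((hsmul.filter_mono nhdsWithin_le_nhds).and
    (self_mem_nhdsWithin (s := Ioi 0))).exists
  refine ⟨t, ht, ?_⟩
  have hline : AffineMap.lineMap β y (-t) = ((t • d : (affineSpan ℝ s).direction) : E) + β := by
    simp only [AffineMap.lineMap_apply_module, d, SetLike.val_smul]
    module
  exact hline ▸ hts

theorem Convex.exists_strongDual_isMaxOn_lt_of_notMem_intrinsicInterior [FiniteDimensional ℝ E]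
    (hs : Convex ℝ s) (hβ : β ∈ s) (hβi : β ∉ intrinsicInterior ℝ s) :
    ∃ φ : StrongDual ℝ E, IsMaxOn φ s β ∧ ∃ y ∈ s, φ y < φ β := by
  set W := (affineSpan ℝ s).direction
  set s₀ : Set W := (fun w : W => (w : E) + β) ⁻¹' s
  have hconv : Convex ℝ s₀ := (hs.translate_preimage_left β).linear_preimage W.subtype
  have h0 : (0 : W) ∉ interior s₀ := (zero_mem_interior_preimage_add_iff hβ).not.2 hβi
  have hne : (interior s₀).Nonempty :=
    (intrinsicInterior_eq_image_interior_preimage_add hβ ▸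
      Set.Nonempty.intrinsicInterior hs ⟨β, hβ⟩).of_image
  obtain ⟨g, hg0, hgmax⟩ := geometric_hahn_banach_of_nonempty_interior_point hconv h0 hne
  rw [map_zero] at hgmax
  -- A nonzero functional is an open map, so it cannot attain its maximum `0` on `interior s₀`.
  have hneg : g '' interior s₀ ⊆ Iio 0 := by
    rw [← interior_Iic]
    exact interior_maximal (image_subset_iff.2 fun a ha => hgmax a (interior_subset ha))
      (g.isOpenMap_of_ne_zero hg0 _ isOpen_interior)
  obtain ⟨a, ha⟩ := hne
  obtain ⟨φ, hφ, -⟩ := exists_extension_norm_eq W g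
  refine ⟨φ, isMaxOn_iff.2 fun y hy => ?_, (a : E) + β, interior_subset (s := s₀) ha, ?_⟩
  · have hyW : y - β ∈ W := AffineSubspace.vsub_mem_direction (subset_affineSpan ℝ s hy)
      (subset_affineSpan ℝ s hβ)
    have := hgmax ⟨y - β, hyW⟩ (by simpa [s₀] using hy)
    rw [← hφ, map_sub] at this
    linarith
  · have := hneg ⟨a, ha, rfl⟩
    rw [mem_Iio, ← hφ] at this
    rw [map_add]
    linarith

theorem Convex.mem_intrinsicInterior_iff_forall_exists_lt [FiniteDimensional ℝ E]
    (hs : Convex ℝ s) (hβ : β ∈ s) :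
    β ∈ intrinsicInterior ℝ s ↔
      ∀ φ : StrongDual ℝ E, (∃ y ∈ s, φ β < φ y) → ∃ y ∈ s, φ y < φ β := by
  refine ⟨fun hβi φ ⟨y, hy, hlt⟩ => ?_, fun h => ?_⟩
  · obtain ⟨t, ht, hmem⟩ := exists_pos_lineMap_neg_mem_of_mem_intrinsicInterior hβi hy
    refine ⟨_, hmem, ?_⟩
    simp only [AffineMap.lineMap_apply_module, map_add, map_smul, smul_eq_mul]
    nlinarith
  · by_contra hβi
    obtain ⟨φ, hmax, y, hy, hlt⟩ :=
      hs.exists_strongDual_isMaxOn_lt_of_notMem_intrinsicInterior hβ hβi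
    obtain ⟨z, hz, hzlt⟩ := h (-φ) ⟨y, hy, by simpa using hlt⟩
    exact (hmax hz).not_gt (by simpa using hzlt)

end IntrinsicInterior

section ClosedConvexHull

variable {E : Type*} [NormedAddCommGroup E] [NormedSpace ℝ E] {V : Set E} {β : E}

theorem mem_closedConvexHull_iff_forall_exists_le (hV : IsCompact V) (hne : V.Nonempty) :
    β ∈ closedConvexHull ℝ V ↔ ∀ φ : StrongDual ℝ E, ∃ v ∈ V, φ v ≤ φ β := by
  refine ⟨fun hβ φ => ?_, fun h => ?_⟩
  · obtain ⟨v, hv, hmin⟩ := hV.exists_isMinOn hne φ.continuous.continuousOn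
    exact ⟨v, hv, closedConvexHull_min hmin (convex_halfSpace_ge φ.isLinear _)
      (isClosed_le continuous_const φ.continuous) hβ⟩
  · by_contra hβ
    obtain ⟨φ, u, hβu, hu⟩ := geometric_hahn_banach_point_closed convex_closedConvexHull
      isClosed_closedConvexHull hβ
    obtain ⟨v, hv, hle⟩ := h φ
    linarith [hu v (subset_closedConvexHull hv)]

theorem mem_intrinsicInterior_closedConvexHull_iff [FiniteDimensional ℝ E] (hV : IsCompact V)
    (hne : V.Nonempty) :
    β ∈ intrinsicInterior ℝ (closedConvexHull ℝ V) ↔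
      ∀ φ : StrongDual ℝ E, (∃ v ∈ V, φ β < φ v) → ∃ v ∈ V, φ v < φ β := by
  have hmin := fun {y} => (mem_closedConvexHull_iff_forall_exists_le (β := y) hV hne).1
  refine ⟨fun hβ φ ⟨v, hv, hlt⟩ => ?_, fun h => ?_⟩
  · obtain ⟨y, hy, hyβ⟩ := (convex_closedConvexHull.mem_intrinsicInterior_iff_forall_exists_lt
      (intrinsicInterior_subset hβ)).1 hβ φ ⟨v, subset_closedConvexHull hv, hlt⟩
    obtain ⟨w, hw, hwy⟩ := hmin hy φ
    exact ⟨w, hw, hwy.trans_lt hyβ⟩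
  have hβ : β ∈ closedConvexHull ℝ V := by
    refine (mem_closedConvexHull_iff_forall_exists_le hV hne).2 fun φ => ?_
    by_contra! hlt
    obtain ⟨v, hv⟩ := hne
    obtain ⟨w, hw, hwβ⟩ := h φ ⟨v, hv, hlt v hv⟩
    exact (hlt w hw).not_gt hwβ
  refine (convex_closedConvexHull.mem_intrinsicInterior_iff_forall_exists_lt hβ).2
    fun φ ⟨y, hy, hlt⟩ => ?_
  obtain ⟨v, hv, hvy⟩ := hmin hy (-φ)
  obtain ⟨w, hw, hwβ⟩ := h φ ⟨v, hv, by
    simp only [neg_apply, neg_le_neg_iff] at hvy; linarith⟩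
  exact ⟨w, subset_closedConvexHull hw, hwβ⟩

end ClosedConvexHull

noncomputable def dotProductStrongDual (k : ℕ) : (Fin k → ℝ) ≃ StrongDual ℝ (Fin k → ℝ) :=
  ((dotProductEquiv ℝ (Fin k)).trans LinearMap.toContinuousLinearMap).toEquiv

theorem sum_mul_sub_eq_dotProductStrongDual {k : ℕ} (σ β v : Fin k → ℝ) :
    ∑ i, σ i * (β i - v i) = dotProductStrongDual k σ β - dotProductStrongDual k σ v := by
  simp [dotProductStrongDual, dotProduct, mul_sub, Finset.sum_sub_distrib]

theorem coherent_iff_forall_exists_le {n k : ℕ} {f : Fin k → (Fin n → ℝ) → ℝ} {β : Fin k → ℝ} :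
    Coherent n k f β ↔
      ∀ φ : StrongDual ℝ (Fin k → ℝ), ∃ v ∈ (fun x i => f i x) '' cube n, φ v ≤ φ β := by
  simp only [Coherent, sum_mul_sub_eq_dotProductStrongDual _ β (fun i => f _ _), sub_nonneg,
    exists_mem_image]
  exact (dotProductStrongDual k).forall_congr_right
    (q := fun φ => ∃ x ∈ cube n, φ (fun i => f i x) ≤ φ β)

theorem strictlyCoherent_iff_forall_exists_lt {n k : ℕ} {f : Fin k → (Fin n → ℝ) → ℝ}
    {β : Fin k → ℝ} :
    StrictlyCoherent n k f β ↔
      ∀ φ : StrongDual ℝ (Fin k → ℝ), (∃ v ∈ (fun x i => f i x) '' cube n, φ β < φ v) →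
        ∃ v ∈ (fun x i => f i x) '' cube n, φ v < φ β := by
  simp only [StrictlyCoherent, sum_mul_sub_eq_dotProductStrongDual _ β (fun i => f _ _),
    sub_neg, sub_pos, exists_mem_image]
  exact (dotProductStrongDual k).forall_congr_right (q := fun φ =>
    (∃ x ∈ cube n, φ β < φ (fun i => f i x)) → ∃ x ∈ cube n, φ (fun i => f i x) < φ β)

theorem stmt3 (n k : ℕ) (f : Fin k → (Fin n → ℝ) → ℝ) (hf : ∀ i, IsMcNaughton n (f i)) :
    {β : Fin k → ℝ | (∀ i, β i ∈ Set.Icc (0 : ℝ) 1) ∧ StrictlyCoherent n k f β} =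
    intrinsicInterior ℝ {β : Fin k → ℝ | (∀ i, β i ∈ Set.Icc (0 : ℝ) 1) ∧ Coherent n k f β} := by
  set V := (fun x i => f i x) '' cube n
  have hV : IsCompact V := isCompact_Icc.image_of_continuousOn (continuousOn_pi.2 fun i => (hf i).1)
  have hne : V.Nonempty := ⟨_, 0, ⟨le_rfl, zero_le_one⟩, rfl⟩
  have hbox : closedConvexHull ℝ V ⊆ univ.pi fun _ => Icc 0 1 :=
    closedConvexHull_min (image_subset_iff.2 fun x hx i _ => (hf i).2.1 x hx)
      (convex_pi fun _ _ => convex_Icc 0 1) (isClosed_set_pi fun _ _ => isClosed_Icc)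
  have hcoh : {β : Fin k → ℝ | (∀ i, β i ∈ Icc (0 : ℝ) 1) ∧ Coherent n k f β} =
      closedConvexHull ℝ V := by
    ext β
    rw [mem_ofPred_eq, coherent_iff_forall_exists_le,
      ← mem_closedConvexHull_iff_forall_exists_le hV hne]
    exact and_iff_right_of_imp fun h i => hbox h i (mem_univ i)
  ext β
  rw [hcoh, mem_ofPred_eq, strictlyCoherent_iff_forall_exists_lt,
    ← mem_intrinsicInterior_closedConvexHull_iff hV hne]
  exact and_iff_right_of_imp fun h i => hbox (intrinsicInterior_subset h) i (mem_univ i)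
end

section
/- Let f_1, …, f_k be McNaughton functions on [0,1]^n and let V ⊆ [0,1]^n be a finite set such that the convex hull of {(f_1(x), …, f_k(x)) : x ∈ [0,1]^n} equals the convex hull of {(f_1(v), …, f_k(v)) : v ∈ V}. Then a book β on f_1, …, f_k is strictly coherent if and only if there exists a map λ : V → [0,1] with Σ_{v∈V} λ(v) = 1, λ(v) > 0 for all v ∈ V, and β_i = Σ_{v∈V} λ(v)·f_i(v) for every i = 1, …, k. -/
open Set MeasureTheory

open Matrix

/-- Farkas' lemma for finitely generated cones in `ℝ^k`, by induction on the
number of generators. -/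
theorem myFarkas (k : ℕ) : ∀ (m : ℕ) (a : Fin m → Fin k → ℝ) (b : Fin k → ℝ),
    (∃ μ : Fin m → ℝ, (∀ i, 0 ≤ μ i) ∧ b = ∑ i, μ i • a i) ∨
    (∃ σ : Fin k → ℝ, (∀ i, 0 ≤ σ ⬝ᵥ a i) ∧ σ ⬝ᵥ b < 0) := by
  intro m
  induction m with
  | zero =>
    intro a b
    by_cases hb : b = 0
    · exact Or.inl ⟨fun _ => 0, fun i => le_rfl, by simp [hb]⟩
    · refine Or.inr ⟨-b, fun i => i.elim0, ?_⟩
      have hbb : 0 < b ⬝ᵥ b :=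
        lt_of_le_of_ne (Finset.sum_nonneg fun i _ => mul_self_nonneg (b i))
          (fun e => hb (dotProduct_self_eq_zero.mp e.symm))
      simpa [neg_dotProduct] using neg_neg_of_pos hbb
  | succ m ih =>
    intro a b
    rcases ih (fun i => a i.castSucc) b with ⟨μ, hμ, hb⟩ | ⟨σ, hσ, hσb⟩
    · left
      refine ⟨Fin.snoc μ 0, ?_, ?_⟩
      · intro i
        induction i using Fin.lastCases with
        | last => simp
        | cast i => simpa using hμ i
      · rw [Fin.sum_univ_castSucc]
        simpa using hb
    · by_cases hlast : 0 ≤ σ ⬝ᵥ a (Fin.last m)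
      · right
        refine ⟨σ, fun i => ?_, hσb⟩
        induction i using Fin.lastCases with
        | last => exact hlast
        | cast i => exact hσ i
      · push_neg at hlast
        set aL := a (Fin.last m) with haL
        set d := σ ⬝ᵥ aL with hd
        have hdlt : d < 0 := hlast
        have hdne : d ≠ 0 := ne_of_lt hdlt
        rcases ih (fun i => a i.castSucc - ((σ ⬝ᵥ a i.castSucc) / d) • aL)
            (b - ((σ ⬝ᵥ b) / d) • aL) with ⟨μ, hμ, hb'⟩ | ⟨τ, hτ, hτb⟩
        · left
          set γ := (σ ⬝ᵥ b) / d - ∑ i, μ i * ((σ ⬝ᵥ a i.castSucc) / d) with hγ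
          have hγe : γ = (σ ⬝ᵥ b - ∑ i, μ i * (σ ⬝ᵥ a i.castSucc)) / d := by
            rw [hγ, sub_div, Finset.sum_div]
            congr 1
            exact Finset.sum_congr rfl fun i _ => by ring
          have hγ0 : 0 ≤ γ := by
            rw [hγe]
            apply le_of_lt
            apply div_pos_of_neg_of_neg _ hdlt
            have hs : 0 ≤ ∑ i, μ i * (σ ⬝ᵥ a i.castSucc) :=
              Finset.sum_nonneg fun i _ => mul_nonneg (hμ i) (hσ i)
            linarith
          refine ⟨Fin.snoc μ γ, ?_, ?_⟩
          · intro i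
            induction i using Fin.lastCases with
            | last => simpa using hγ0
            | cast i => simpa using hμ i
          · rw [Fin.sum_univ_castSucc]
            simp only [Fin.snoc_castSucc, Fin.snoc_last]
            have hexp : ∑ i, μ i • (a i.castSucc - ((σ ⬝ᵥ a i.castSucc) / d) • aL) =
                (∑ i, μ i • a i.castSucc) -
                  (∑ i, μ i * ((σ ⬝ᵥ a i.castSucc) / d)) • aL := by
              simp only [smul_sub, smul_smul]
              rw [Finset.sum_sub_distrib, Finset.sum_smul]
            have hb2 : b = (∑ i, μ i • a i.castSucc) -
                (∑ i, μ i * ((σ ⬝ᵥ a i.castSucc) / d)) • aL + ((σ ⬝ᵥ b) / d) • aL := by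
              rw [← hexp, ← hb']; abel
            rw [hb2, hγ, sub_smul]; abel
        · right
          refine ⟨τ - ((τ ⬝ᵥ aL) / d) • σ, fun i => ?_, ?_⟩
          · induction i using Fin.lastCases with
            | last =>
              have : (τ - ((τ ⬝ᵥ aL) / d) • σ) ⬝ᵥ aL = τ ⬝ᵥ aL - ((τ ⬝ᵥ aL) / d) * d := by
                rw [sub_dotProduct, smul_dotProduct, smul_eq_mul, ← hd]
              rw [haL] at this ⊢
              rw [this, div_mul_cancel₀ _ hdne, sub_self]
            | cast i =>
              have h1 := hτ i
              have h2 : τ ⬝ᵥ (a i.castSucc - ((σ ⬝ᵥ a i.castSucc) / d) • aL) =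
                  τ ⬝ᵥ a i.castSucc - ((σ ⬝ᵥ a i.castSucc) / d) * (τ ⬝ᵥ aL) := by
                rw [dotProduct_sub, dotProduct_smul, smul_eq_mul]
              have h3 : (τ - ((τ ⬝ᵥ aL) / d) • σ) ⬝ᵥ a i.castSucc =
                  τ ⬝ᵥ a i.castSucc - ((τ ⬝ᵥ aL) / d) * (σ ⬝ᵥ a i.castSucc) := by
                rw [sub_dotProduct, smul_dotProduct, smul_eq_mul]
              rw [h3]
              rw [h2] at h1
              have : ((σ ⬝ᵥ a i.castSucc) / d) * (τ ⬝ᵥ aL) =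
                  ((τ ⬝ᵥ aL) / d) * (σ ⬝ᵥ a i.castSucc) := by ring
              linarith [this ▸ h1]
          · have h2 : τ ⬝ᵥ (b - ((σ ⬝ᵥ b) / d) • aL) =
                τ ⬝ᵥ b - ((σ ⬝ᵥ b) / d) * (τ ⬝ᵥ aL) := by
              rw [dotProduct_sub, dotProduct_smul, smul_eq_mul]
            have h3 : (τ - ((τ ⬝ᵥ aL) / d) • σ) ⬝ᵥ b =
                τ ⬝ᵥ b - ((τ ⬝ᵥ aL) / d) * (σ ⬝ᵥ b) := by
              rw [sub_dotProduct, smul_dotProduct, smul_eq_mul]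
            rw [h3]
            rw [h2] at hτb
            have h4 : (τ ⬝ᵥ aL) / d * (σ ⬝ᵥ b) = (σ ⬝ᵥ b) / d * (τ ⬝ᵥ aL) := by ring
            linarith

theorem stmt5 (n k : ℕ) (f : Fin k → (Fin n → ℝ) → ℝ) (hf : ∀ i, IsMcNaughton n (f i))
    (V : Finset (Fin n → ℝ)) (hVc : ∀ v ∈ V, v ∈ cube n)
    (hV : convexHull ℝ ((fun x => fun i => f i x) '' cube n) =
          convexHull ℝ ((fun x => fun i => f i x) '' ↑V))
    (β : Fin k → ℝ) (hβ : ∀ i, β i ∈ Set.Icc (0 : ℝ) 1) :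
    StrictlyCoherent n k f β ↔
      ∃ lam : (Fin n → ℝ) → ℝ,
        (∀ v ∈ V, 0 < lam v ∧ lam v ≤ 1) ∧
        (∑ v ∈ V, lam v) = 1 ∧
        ∀ i, β i = ∑ v ∈ V, lam v * f i v := by
  classical
  set F : (Fin n → ℝ) → (Fin k → ℝ) := fun x => fun i => f i x with hF
  have hx0 : (0 : Fin n → ℝ) ∈ cube n := Set.mem_Icc.mpr ⟨le_rfl, zero_le_one⟩
  have hmem : ∀ x ∈ cube n, F x ∈ convexHull ℝ (F '' (↑V : Set (Fin n → ℝ))) := by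
    intro x hx
    have h1 : F x ∈ convexHull ℝ (F '' cube n) :=
      subset_convexHull ℝ _ (Set.mem_image_of_mem F hx)
    rwa [hV] at h1
  have hVne : V.Nonempty := by
    rcases Finset.eq_empty_or_nonempty V with h | h
    · exfalso
      have h1 := hmem 0 hx0
      rw [h] at h1
      simpa using h1
    · exact h
  have hlin : ∀ σ : Fin k → ℝ, IsLinearMap ℝ (fun z : Fin k → ℝ => σ ⬝ᵥ z) :=
    fun σ => ⟨fun x y => dotProduct_add σ x y, fun c x => dotProduct_smul c σ x⟩
  have hconv : ∀ (σ : Fin k → ℝ) (x : Fin n → ℝ),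
      ∑ i, σ i * (β i - f i x) = σ ⬝ᵥ β - σ ⬝ᵥ F x := by
    intro σ x
    rw [dotProduct, dotProduct, ← Finset.sum_sub_distrib]
    refine Finset.sum_congr rfl fun i _ => ?_
    simp only [hF]
    ring
  have hupper : ∀ σ : Fin k → ℝ, (∀ v ∈ V, σ ⬝ᵥ β ≤ σ ⬝ᵥ F v) →
      ∀ x ∈ cube n, σ ⬝ᵥ β ≤ σ ⬝ᵥ F x := by
    intro σ h x hx
    have hsub : convexHull ℝ (F '' (↑V : Set (Fin n → ℝ))) ⊆
        {z : Fin k → ℝ | σ ⬝ᵥ β ≤ σ ⬝ᵥ z} := by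
      apply convexHull_min
      · rintro z ⟨v, hv, rfl⟩
        exact h v hv
      · exact convex_halfSpace_ge (hlin σ) (σ ⬝ᵥ β)
    exact hsub (hmem x hx)
  set N : ℝ := (V.card : ℝ) with hNdef
  have hN : 0 < N := by
    rw [hNdef]
    exact_mod_cast Finset.card_pos.mpr hVne
  set c : Fin k → ℝ := fun i => N⁻¹ * ∑ v ∈ V, f i v with hc
  set e := V.equivFin with he
  set a : Fin V.card → Fin k → ℝ := fun j => F ↑(e.symm j) - β with ha
  have hVsum : ∀ G : (Fin n → ℝ) → ℝ, ∑ v ∈ V, G v = ∑ j, G ↑(e.symm j) := by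
    intro G
    rw [← Finset.sum_coe_sort V G]
    exact (Equiv.sum_comp e.symm fun u : {x // x ∈ V} => G ↑u).symm
  constructor
  · -- strictly coherent → positive convex combination
    intro hSC
    rcases myFarkas k V.card a (β - c) with ⟨μ, hμ, hb⟩ | ⟨σ, hσ, hσb⟩
    · set s := ∑ j, μ j with hs
      have hs0 : 0 ≤ s := Finset.sum_nonneg fun j _ => hμ j
      have h1plus : (0 : ℝ) < 1 + s := by linarith
      set lam : (Fin n → ℝ) → ℝ :=
        fun v => if h : v ∈ V then (N⁻¹ + μ (e ⟨v, h⟩)) / (1 + s) else 0 with hlam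
      have hlamval : ∀ j, lam ↑(e.symm j) = (N⁻¹ + μ j) / (1 + s) := by
        intro j
        have hmemv : ↑(e.symm j) ∈ V := (e.symm j).2
        simp only [hlam]
        rw [dif_pos hmemv]
        have hsub : (⟨↑(e.symm j), hmemv⟩ : {x // x ∈ V}) = e.symm j := Subtype.coe_eta _ _
        rw [hsub, Equiv.apply_symm_apply]
      have hpos : ∀ v ∈ V, 0 < lam v := by
        intro v hv
        simp only [hlam]
        rw [dif_pos hv]
        exact div_pos (add_pos_of_pos_of_nonneg (inv_pos.mpr hN) (hμ _)) h1plus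
      have hsum1 : ∑ v ∈ V, lam v = 1 := by
        rw [hVsum lam, Finset.sum_congr rfl fun j _ => hlamval j, ← Finset.sum_div,
          Finset.sum_add_distrib, Finset.sum_const, Finset.card_univ, Fintype.card_fin,
          nsmul_eq_mul, ← hNdef, mul_inv_cancel₀ (ne_of_gt hN), hs]
        exact div_self (ne_of_gt h1plus)
      have hkey : ∀ i, β i - c i = ∑ j, μ j * (f i ↑(e.symm j) - β i) := by
        intro i
        have h := congrFun hb i
        simpa [ha, hF, Finset.sum_apply, Pi.sub_apply, Pi.smul_apply, smul_eq_mul] using h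
      refine ⟨lam, fun v hv => ⟨hpos v hv, ?_⟩, hsum1, ?_⟩
      · rw [← hsum1]
        exact Finset.single_le_sum (fun u hu => (hpos u hu).le) hv
      · intro i
        have hci : c i = N⁻¹ * ∑ j, f i ↑(e.symm j) := by
          rw [hc]
          simp only []
          rw [hVsum fun v => f i v]
        have hkey2 : β i - c i = (∑ j, μ j * f i ↑(e.symm j)) - s * β i := by
          rw [hkey i]
          rw [hs, Finset.sum_mul, ← Finset.sum_sub_distrib]
          exact Finset.sum_congr rfl fun j _ => by ring
        rw [hVsum fun v => lam v * f i v]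
        have hterm : ∀ j : Fin V.card, lam ↑(e.symm j) * f i ↑(e.symm j) =
            ((N⁻¹ + μ j) * f i ↑(e.symm j)) / (1 + s) := fun j => by
          rw [hlamval j]; ring
        rw [Finset.sum_congr rfl fun j _ => hterm j, ← Finset.sum_div,
          eq_div_iff (ne_of_gt h1plus)]
        have hXsum : ∑ j, (N⁻¹ + μ j) * f i ↑(e.symm j) =
            N⁻¹ * (∑ j, f i ↑(e.symm j)) + ∑ j, μ j * f i ↑(e.symm j) := by
          rw [Finset.mul_sum, ← Finset.sum_add_distrib]
          exact Finset.sum_congr rfl fun j _ => by ring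
        rw [hXsum, ← hci]
        linarith [hkey2]
    · -- the Farkas alternative contradicts strict coherence
      exfalso
      have hge : ∀ v ∈ V, σ ⬝ᵥ β ≤ σ ⬝ᵥ F v := by
        intro v hv
        have h := hσ (e ⟨v, hv⟩)
        have haj : a (e ⟨v, hv⟩) = F v - β := by
          rw [ha]
          simp only [Equiv.symm_apply_apply]
        rw [haj, dotProduct_sub] at h
        linarith
      have hall := hupper σ hge
      have hc2 : σ ⬝ᵥ c = N⁻¹ * ∑ v ∈ V, σ ⬝ᵥ F v := by
        rw [dotProduct]
        calc ∑ i, σ i * c i = N⁻¹ * ∑ i, ∑ v ∈ V, σ i * f i v := by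
              rw [Finset.mul_sum]
              refine Finset.sum_congr rfl fun i _ => ?_
              rw [hc]
              simp only []
              rw [Finset.mul_sum, Finset.mul_sum]
              rw [Finset.mul_sum]
              ring_nf
          _ = N⁻¹ * ∑ v ∈ V, ∑ i, σ i * f i v := by rw [Finset.sum_comm]
          _ = N⁻¹ * ∑ v ∈ V, σ ⬝ᵥ F v := rfl
      have hlt : ∃ v ∈ V, σ ⬝ᵥ β < σ ⬝ᵥ F v := by
        by_contra hcon
        push_neg at hcon
        have hcb : σ ⬝ᵥ c ≤ σ ⬝ᵥ β := by
          rw [hc2]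
          have h1 : ∑ v ∈ V, σ ⬝ᵥ F v ≤ ∑ v ∈ V, σ ⬝ᵥ β := Finset.sum_le_sum hcon
          have h2 : ∑ v ∈ V, σ ⬝ᵥ β = N * (σ ⬝ᵥ β) := by
            rw [Finset.sum_const, nsmul_eq_mul, hNdef]
          calc N⁻¹ * ∑ v ∈ V, σ ⬝ᵥ F v ≤ N⁻¹ * (N * (σ ⬝ᵥ β)) := by
                apply mul_le_mul_of_nonneg_left _ (inv_nonneg.mpr hN.le)
                rw [← h2]; exact h1
            _ = σ ⬝ᵥ β := by
                rw [← mul_assoc, inv_mul_cancel₀ (ne_of_gt hN), one_mul]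
        rw [dotProduct_sub] at hσb
        linarith
      obtain ⟨v, hv, hvlt⟩ := hlt
      obtain ⟨x', hx', hgt⟩ := hSC σ ⟨v, hVc v hv, by rw [hconv]; linarith⟩
      rw [hconv] at hgt
      have := hall x' hx'
      linarith
  · -- positive convex combination → strictly coherent
    rintro ⟨lam, hpos, hsum, hrep⟩ σ ⟨x, hx, hneg⟩
    rw [hconv] at hneg
    have hβdot : σ ⬝ᵥ β = ∑ v ∈ V, lam v * (σ ⬝ᵥ F v) := by
      calc σ ⬝ᵥ β = ∑ i, σ i * ∑ v ∈ V, lam v * f i v := by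
            rw [dotProduct]
            exact Finset.sum_congr rfl fun i _ => by rw [← hrep i]
        _ = ∑ i, ∑ v ∈ V, σ i * (lam v * f i v) := by
            exact Finset.sum_congr rfl fun i _ => Finset.mul_sum _ _ _
        _ = ∑ v ∈ V, ∑ i, σ i * (lam v * f i v) := Finset.sum_comm
        _ = ∑ v ∈ V, lam v * (σ ⬝ᵥ F v) := by
            refine Finset.sum_congr rfl fun v _ => ?_
            rw [dotProduct, Finset.mul_sum]
            exact Finset.sum_congr rfl fun i _ => by ring
    have hex : ∃ v ∈ V, σ ⬝ᵥ F v < σ ⬝ᵥ β := by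
      by_contra hcon
      push_neg at hcon
      have hzero : ∑ v ∈ V, lam v * (σ ⬝ᵥ F v - σ ⬝ᵥ β) = 0 := by
        have hsplit : ∑ v ∈ V, lam v * (σ ⬝ᵥ F v - σ ⬝ᵥ β) =
            (∑ v ∈ V, lam v * (σ ⬝ᵥ F v)) - (∑ v ∈ V, lam v) * (σ ⬝ᵥ β) := by
          rw [Finset.sum_mul, ← Finset.sum_sub_distrib]
          exact Finset.sum_congr rfl fun v _ => by ring
        rw [hsplit, ← hβdot, hsum]
        ring
      have hallz := (Finset.sum_eq_zero_iff_of_nonneg fun v hv =>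
        mul_nonneg (hpos v hv).1.le (by linarith [hcon v hv])).mp hzero
      have hdv : ∀ v ∈ V, σ ⬝ᵥ F v = σ ⬝ᵥ β := by
        intro v hv
        have h := hallz v hv
        rcases mul_eq_zero.mp h with h' | h'
        · exact absurd h' (ne_of_gt (hpos v hv).1)
        · linarith [h']
      have hsub : convexHull ℝ (F '' (↑V : Set (Fin n → ℝ))) ⊆
          {z : Fin k → ℝ | σ ⬝ᵥ z ≤ σ ⬝ᵥ β} := by
        apply convexHull_min
        · rintro z ⟨v, hv, rfl⟩
          exact le_of_eq (hdv v hv)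
        · exact convex_halfSpace_le (hlin σ) (σ ⬝ᵥ β)
      have hxle := hsub (hmem x hx)
      simp only [Set.mem_setOf_eq] at hxle
      linarith
    obtain ⟨v, hv, hvlt⟩ := hex
    exact ⟨v, hVc v hv, by rw [hconv]; linarith⟩
end

section
/- Let s be a state on the McNaughton functions of [0,1]^n. Then s is faithful if and only if there exists a unique strictly positive regular Borel probability measure μ on [0,1]^n such that s(f) = ∫_{[0,1]^n} f dμ for every McNaughton function f. -/
open Set MeasureTheory

/-- A state on the McNaughton functions of `[0,1]^n`: normalized and additive on
sums of McNaughton functions that stay below `1`. -/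
def IsState (n : ℕ) (s : ((Fin n → ℝ) → ℝ) → ℝ) : Prop :=
  (∀ f, IsMcNaughton n f → s f ∈ Set.Icc (0 : ℝ) 1) ∧
  s (fun _ => 1) = 1 ∧
  ∀ f g, IsMcNaughton n f → IsMcNaughton n g → (∀ x ∈ cube n, f x + g x ≤ 1) →
    s (fun x => f x + g x) = s f + s g

/-- A state is faithful if it is nonzero on every McNaughton function
that is not identically `0` on the cube. -/
def Faithful (n : ℕ) (s : ((Fin n → ℝ) → ℝ) → ℝ) : Prop :=
  ∀ f, IsMcNaughton n f → (∃ x ∈ cube n, f x ≠ 0) → s f ≠ 0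

/-! A state `s` induces the content `λ K = inf {s f | f McNaughton, f ≥ 1 on K}` on the compact
subsets of the cube. It is additive on disjoint compacts because McNaughton functions separate
disjoint closed sets (a truncated sum of bumps on a fine grid), so it yields a regular probability
measure `μ`. For McNaughton `g` and open `O`, both `s g` and `∫ g dμ` are `≥ μ O` if `g ≥ 1` on `O`
and `≤ μ O` if `g > 0` only on `O`. The layers `clamp01 (m f - j)`, `j < m`, of `m f` satisfy
`∑ⱼ s (clamp01 (m f - j)) = m s f`, by telescoping the MV identity
`s a + s b = s (a ⊕ b) + s (a ⊙ b)`; their bounds telescope as well, so `m |s f - ∫ f dμ| ≤ 1`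
for every `m`. Faithfulness of `s` then amounts to `μ` charging nonempty open sets, and any two
representing measures agree on closed sets by the Urysohn functions and outer regularity. -/

open Finset

variable {n : ℕ}

def clamp01 (y : ℝ) : ℝ := max (min y 1) 0

lemma clamp01_nonneg (y : ℝ) : 0 ≤ clamp01 y := le_max_right _ _

lemma clamp01_le_one (y : ℝ) : clamp01 y ≤ 1 := by unfold clamp01; grind

lemma clamp01_of_nonpos {y : ℝ} (h : y ≤ 0) : clamp01 y = 0 := by unfold clamp01; grind

lemma clamp01_of_one_le {y : ℝ} (h : 1 ≤ y) : clamp01 y = 1 := by unfold clamp01; grind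

lemma clamp01_of_mem {y : ℝ} (h₀ : 0 ≤ y) (h₁ : y ≤ 1) : clamp01 y = y := by
  unfold clamp01; grind

lemma continuous_clamp01 : Continuous clamp01 := by unfold clamp01; fun_prop

lemma sum_range_clamp01_sub {y : ℝ} {m : ℕ} (h₀ : 0 ≤ y) (hm : y ≤ m) :
    ∑ j ∈ range m, clamp01 (y - j) = y := by
  induction m generalizing y with
  | zero => simp only [range_zero, sum_empty]; exact le_antisymm h₀ (by simpa using hm)
  | succ m ih =>
    rw [sum_range_succ]
    rcases le_total y m with h | h
    · rw [ih h₀ h, clamp01_of_nonpos (by linarith), add_zero]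
    · have hj : ∀ j ∈ range m, clamp01 (y - j) = 1 := fun j hj => by
        have : (j : ℝ) + 1 ≤ m := by exact_mod_cast mem_range.mp hj
        exact clamp01_of_one_le (by linarith)
      rw [sum_congr rfl hj, sum_const, card_range, nsmul_one,
        clamp01_of_mem (by linarith) (by push_cast at hm; linarith)]
      ring

lemma le_of_forall_natCast_mul_sub_le_one {a b : ℝ} (h : ∀ m : ℕ, 0 < m → m * (a - b) ≤ 1) :
    a ≤ b := by
  by_contra! hab
  obtain ⟨m, hm⟩ := exists_nat_gt (1 / (a - b))
  have hm₀ : (0 : ℝ) < m := (one_div_pos.2 (sub_pos.2 hab)).trans hm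
  linarith [h m (by exact_mod_cast hm₀), (div_lt_iff₀ (sub_pos.2 hab)).1 hm]

lemma abs_sum_range_sub_sum_range_le {a b r : ℕ → ℝ} (m : ℕ)
    (ha : ∀ j, r (j + 1) ≤ a j ∧ a j ≤ r j) (hb : ∀ j, r (j + 1) ≤ b j ∧ b j ≤ r j) :
    |∑ j ∈ range m, a j - ∑ j ∈ range m, b j| ≤ r 0 - r m := by
  rw [← sum_sub_distrib, ← sum_range_sub' r]
  exact (abs_sum_le_sum_abs _ _).trans (sum_le_sum fun j _ =>
    abs_sub_le_iff.2 ⟨by linarith [ha j, hb j], by linarith [ha j, hb j]⟩)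

def IsIntPiecewiseAffineOn (S : Set (Fin n → ℝ)) (f : (Fin n → ℝ) → ℝ) : Prop :=
  ∃ (m : ℕ) (a : Fin m → Fin n → ℤ) (b : Fin m → ℤ),
    ∀ x ∈ S, ∃ j : Fin m, f x = (b j : ℝ) + ∑ i, (a j i : ℝ) * x i

namespace IsIntPiecewiseAffineOn

variable {S : Set (Fin n → ℝ)} {f g h : (Fin n → ℝ) → ℝ}

lemma const (c : ℤ) : IsIntPiecewiseAffineOn S fun _ => (c : ℝ) :=
  ⟨1, fun _ _ => 0, fun _ => c, fun _ _ => ⟨0, by simp⟩⟩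

lemma coord (i : Fin n) : IsIntPiecewiseAffineOn S fun x => x i :=
  ⟨1, fun _ => Pi.single i 1, fun _ => 0, fun x _ => ⟨0, by simp [Pi.single_apply]⟩⟩

lemma add (hf : IsIntPiecewiseAffineOn S f) (hg : IsIntPiecewiseAffineOn S g) :
    IsIntPiecewiseAffineOn S fun x => f x + g x := by
  obtain ⟨m, a, b, hf⟩ := hf
  obtain ⟨m', a', b', hg⟩ := hg
  refine ⟨m * m', fun j => a (finProdFinEquiv.symm j).1 + a' (finProdFinEquiv.symm j).2,
    fun j => b (finProdFinEquiv.symm j).1 + b' (finProdFinEquiv.symm j).2, fun x hx => ?_⟩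
  obtain ⟨j, hj⟩ := hf x hx
  obtain ⟨k, hk⟩ := hg x hx
  refine ⟨finProdFinEquiv (j, k), ?_⟩
  simp only [Equiv.symm_apply_apply, Pi.add_apply, Int.cast_add, add_mul, sum_add_distrib, hj, hk]
  ring

lemma neg (hf : IsIntPiecewiseAffineOn S f) : IsIntPiecewiseAffineOn S fun x => -f x := by
  obtain ⟨m, a, b, hf⟩ := hf
  refine ⟨m, -a, -b, fun x hx => ?_⟩
  obtain ⟨j, hj⟩ := hf x hx
  exact ⟨j, by simp [hj, sum_neg_distrib]; ring⟩

lemma sub (hf : IsIntPiecewiseAffineOn S f) (hg : IsIntPiecewiseAffineOn S g) :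
    IsIntPiecewiseAffineOn S fun x => f x - g x := by
  simpa only [sub_eq_add_neg] using hf.add hg.neg

lemma of_eq_or_eq (hf : IsIntPiecewiseAffineOn S f) (hg : IsIntPiecewiseAffineOn S g)
    (h_eq : ∀ x ∈ S, h x = f x ∨ h x = g x) : IsIntPiecewiseAffineOn S h := by
  obtain ⟨m, a, b, hf⟩ := hf
  obtain ⟨m', a', b', hg⟩ := hg
  refine ⟨m + m', Fin.addCases a a', Fin.addCases b b', fun x hx => ?_⟩
  rcases h_eq x hx with he | he
  · obtain ⟨j, hj⟩ := hf x hx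
    exact ⟨Fin.castAdd m' j, by simpa using he.trans hj⟩
  · obtain ⟨k, hk⟩ := hg x hx
    exact ⟨Fin.natAdd m k, by simpa using he.trans hk⟩

lemma min (hf : IsIntPiecewiseAffineOn S f) (hg : IsIntPiecewiseAffineOn S g) :
    IsIntPiecewiseAffineOn S fun x => min (f x) (g x) :=
  of_eq_or_eq hf hg fun _ _ => min_choice _ _

lemma max (hf : IsIntPiecewiseAffineOn S f) (hg : IsIntPiecewiseAffineOn S g) :
    IsIntPiecewiseAffineOn S fun x => max (f x) (g x) :=
  of_eq_or_eq hf hg fun _ _ => max_choice _ _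

lemma clamp01_comp (hf : IsIntPiecewiseAffineOn S f) :
    IsIntPiecewiseAffineOn S fun x => clamp01 (f x) := by
  simpa only [clamp01, Int.cast_one, Int.cast_zero] using (hf.min (const 1)).max (const 0)

lemma sum {ι : Type*} (t : Finset ι) {F : ι → (Fin n → ℝ) → ℝ}
    (hF : ∀ k ∈ t, IsIntPiecewiseAffineOn S (F k)) :
    IsIntPiecewiseAffineOn S fun x => ∑ k ∈ t, F k x := by
  classical
  induction t using Finset.induction_on with
  | empty => simpa using const (S := S) 0
  | insert k t hk ih =>
    simp_rw [sum_insert hk]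
    exact (hF k (mem_insert_self k t)).add (ih fun k' hk' => hF k' (mem_insert_of_mem hk'))

lemma natCast_mul (hf : IsIntPiecewiseAffineOn S f) (m : ℕ) :
    IsIntPiecewiseAffineOn S fun x => m * f x := by
  simpa using sum (range m) fun _ _ => hf

end IsIntPiecewiseAffineOn

lemma isMcNaughton_clamp01 {g : (Fin n → ℝ) → ℝ} (hc : ContinuousOn g (cube n))
    (hp : IsIntPiecewiseAffineOn (cube n) g) : IsMcNaughton n fun x => clamp01 (g x) :=
  ⟨continuous_clamp01.comp_continuousOn hc,
    fun _ _ => ⟨clamp01_nonneg _, clamp01_le_one _⟩, hp.clamp01_comp⟩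

lemma isMcNaughton_clamp01_sub_natCast {g : (Fin n → ℝ) → ℝ} (hc : ContinuousOn g (cube n))
    (hp : IsIntPiecewiseAffineOn (cube n) g) (j : ℕ) :
    IsMcNaughton n fun x => clamp01 (g x - (j : ℝ)) :=
  isMcNaughton_clamp01 (hc.sub continuousOn_const)
    (by simpa only [Int.cast_natCast] using hp.sub (.const j))

namespace IsMcNaughton

variable {f g : (Fin n → ℝ) → ℝ}

lemma nonneg (hf : IsMcNaughton n f) {x : Fin n → ℝ} (hx : x ∈ cube n) : 0 ≤ f x :=
  (hf.2.1 x hx).1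

lemma le_one (hf : IsMcNaughton n f) {x : Fin n → ℝ} (hx : x ∈ cube n) : f x ≤ 1 :=
  (hf.2.1 x hx).2

lemma isIntPiecewiseAffineOn (hf : IsMcNaughton n f) : IsIntPiecewiseAffineOn (cube n) f :=
  hf.2.2

lemma one : IsMcNaughton n fun _ => 1 := by
  have h : IsIntPiecewiseAffineOn (cube n) fun _ => 1 := by
    simpa using IsIntPiecewiseAffineOn.const (S := cube n) (1 : ℤ)
  exact ⟨continuousOn_const, fun _ _ => ⟨zero_le_one, le_rfl⟩, h⟩

lemma sub (hf : IsMcNaughton n f) (hg : IsMcNaughton n g) (hgf : ∀ x ∈ cube n, g x ≤ f x) :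
    IsMcNaughton n fun x => f x - g x :=
  ⟨hf.1.sub hg.1, fun x hx => ⟨by linarith [hgf x hx], by linarith [hf.le_one hx, hg.nonneg hx]⟩,
    hf.isIntPiecewiseAffineOn.sub hg.isIntPiecewiseAffineOn⟩

-- `clamp01 (f + g)` and `clamp01 (f + g - 1)` are the Łukasiewicz operations `f ⊕ g`, `f ⊙ g`.
lemma oplus (hf : IsMcNaughton n f) (hg : IsMcNaughton n g) :
    IsMcNaughton n fun x => clamp01 (f x + g x) :=
  isMcNaughton_clamp01 (hf.1.add hg.1) (hf.isIntPiecewiseAffineOn.add hg.isIntPiecewiseAffineOn)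

lemma odot (hf : IsMcNaughton n f) (hg : IsMcNaughton n g) :
    IsMcNaughton n fun x => clamp01 (f x + g x - 1) :=
  isMcNaughton_clamp01 ((hf.1.add hg.1).sub continuousOn_const) (by
    simpa using (hf.isIntPiecewiseAffineOn.add hg.isIntPiecewiseAffineOn).sub (.const 1))

lemma clamp01_natCast_mul_sub (hf : IsMcNaughton n f) (m j : ℕ) :
    IsMcNaughton n fun x => clamp01 (m * f x - j) :=
  isMcNaughton_clamp01 ((continuousOn_const.mul hf.1).sub continuousOn_const)
    (by simpa using (hf.isIntPiecewiseAffineOn.natCast_mul m).sub (.const j))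

end IsMcNaughton

namespace IsState

variable {s : ((Fin n → ℝ) → ℝ) → ℝ} (hs : IsState n s) {f g : (Fin n → ℝ) → ℝ}
include hs

lemma nonneg (hf : IsMcNaughton n f) : 0 ≤ s f := (hs.1 f hf).1

lemma le_one (hf : IsMcNaughton n f) : s f ≤ 1 := (hs.1 f hf).2

lemma map_sub (hf : IsMcNaughton n f) (hg : IsMcNaughton n g)
    (hgf : ∀ x ∈ cube n, g x ≤ f x) : s (fun x => f x - g x) = s f - s g := by
  have h := hs.2.2 g _ hg (hf.sub hg hgf) fun x hx => by linarith [hf.le_one hx]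
  simp only [add_sub_cancel] at h
  linarith

lemma mono (hf : IsMcNaughton n f) (hg : IsMcNaughton n g) (hfg : ∀ x ∈ cube n, f x ≤ g x) :
    s f ≤ s g := by
  linarith [hs.map_sub hg hf hfg, hs.nonneg (hg.sub hf hfg)]

lemma congr (hf : IsMcNaughton n f) (hg : IsMcNaughton n g) (hfg : ∀ x ∈ cube n, f x = g x) :
    s f = s g :=
  le_antisymm (hs.mono hf hg fun x hx => (hfg x hx).le) (hs.mono hg hf fun x hx => (hfg x hx).ge)

lemma eq_zero (hf : IsMcNaughton n f) (hf₀ : ∀ x ∈ cube n, f x = 0) : s f = 0 := by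
  have hff := hf.sub hf fun _ _ => le_rfl
  rw [hs.congr hf hff fun x hx => by simp [hf₀ x hx], hs.map_sub hf hf fun _ _ => le_rfl,
    sub_self]

lemma eq_one (hf : IsMcNaughton n f) (hf₁ : ∀ x ∈ cube n, f x = 1) : s f = 1 :=
  (hs.congr hf .one hf₁).trans hs.2.1

lemma add_eq_oplus_add_odot (hf : IsMcNaughton n f) (hg : IsMcNaughton n g) :
    s f + s g = s (fun x => clamp01 (f x + g x)) + s (fun x => clamp01 (f x + g x - 1)) := by
  have hoplus := hf.oplus hg
  have hodot := hf.odot hg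
  have hle : ∀ x ∈ cube n, clamp01 (f x + g x - 1) ≤ g x := fun x hx => by
    unfold clamp01; grind [hf.le_one hx, hg.nonneg hx]
  have hle' : ∀ x ∈ cube n, f x ≤ clamp01 (f x + g x) := fun x hx => by
    unfold clamp01; grind [hf.le_one hx, hg.nonneg hx]
  have key := hs.congr (hoplus.sub hf hle') (hg.sub hodot hle) fun x hx => by
    unfold clamp01; grind [hf.le_one hx, hf.nonneg hx, hg.le_one hx, hg.nonneg hx]
  rw [hs.map_sub hoplus hf hle', hs.map_sub hg hodot hle] at key
  linarith

lemma oplus_le (hf : IsMcNaughton n f) (hg : IsMcNaughton n g) :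
    s (fun x => clamp01 (f x + g x)) ≤ s f + s g := by
  linarith [hs.add_eq_oplus_add_odot hf hg, hs.nonneg (hf.odot hg)]

lemma sum_layers_add {g b : (Fin n → ℝ) → ℝ} (hgc : ContinuousOn g (cube n))
    (hgp : IsIntPiecewiseAffineOn (cube n) g) {K : ℕ} (hg : ∀ x ∈ cube n, 0 ≤ g x ∧ g x ≤ K)
    (hb : IsMcNaughton n b) :
    ∑ j ∈ range (K + 1), s (fun x => clamp01 (g x + b x - (j : ℝ))) =
      ∑ j ∈ range K, s (fun x => clamp01 (g x - (j : ℝ))) + s b := by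
  set u : ℕ → (Fin n → ℝ) → ℝ := fun j x => clamp01 (g x - (j : ℝ))
  -- `c j` is the carry that layer `j - 1` of `g` passes to layer `j` when `b` is added.
  set c : ℕ → (Fin n → ℝ) → ℝ := fun j x => clamp01 (clamp01 (g x - (j : ℝ) + 1) + b x - 1)
  have hu : ∀ j, IsMcNaughton n (u j) := isMcNaughton_clamp01_sub_natCast hgc hgp
  have hc : ∀ j, IsMcNaughton n (c j) := fun j =>
    IsMcNaughton.odot (isMcNaughton_clamp01 ((hgc.sub continuousOn_const).add continuousOn_const)
      (by simpa only [Int.cast_natCast, Int.cast_one] using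
        (hgp.sub (.const j)).add (.const 1))) hb
  have hstep : ∀ j : ℕ,
      s (fun x => clamp01 (g x + b x - (j : ℝ))) = s (u j) + (s (c j) - s (c (j + 1))) := by
    intro j
    have h := hs.add_eq_oplus_add_odot (hu j) (hc j)
    rw [hs.congr ((hu j).oplus (hc j))
        (isMcNaughton_clamp01_sub_natCast (g := fun x => g x + b x) (hgc.add hb.1)
          (hgp.add hb.isIntPiecewiseAffineOn) j) fun x hx => by
        simp only [u, c]; unfold clamp01; grind [hb.nonneg hx, hb.le_one hx],
      hs.congr ((hu j).odot (hc j)) (hc (j + 1)) fun x hx => by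
        simp only [u, c]; push_cast; unfold clamp01; grind [hb.nonneg hx, hb.le_one hx]] at h
    linarith
  have hc₀ : s (c 0) = s b := hs.congr (hc 0) hb fun x hx => by
    simp only [c]; unfold clamp01; grind [hb.nonneg hx, hb.le_one hx, hg x hx]
  have hcK : s (c (K + 1)) = 0 := hs.eq_zero (hc (K + 1)) fun x hx => by
    simp only [c]; push_cast; unfold clamp01; grind [hb.nonneg hx, hb.le_one hx, hg x hx]
  have huK : s (u K) = 0 := hs.eq_zero (hu K) fun x hx => by
    simp only [u]; unfold clamp01; grind [hg x hx]
  rw [sum_congr rfl fun j _ => hstep j, sum_add_distrib, sum_range_sub' (fun j => s (c j)),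
    sum_range_succ, huK, hc₀, hcK]
  ring

lemma sum_layers_natCast_mul {f : (Fin n → ℝ) → ℝ} (hf : IsMcNaughton n f) (m : ℕ) :
    ∑ j ∈ range m, s (fun x => clamp01 (m * f x - (j : ℝ))) = m * s f := by
  induction m with
  | zero => simp
  | succ m ih =>
    have h := hs.sum_layers_add (g := fun x => m * f x) (continuousOn_const.mul hf.1)
      (hf.isIntPiecewiseAffineOn.natCast_mul m)
      (fun x hx => ⟨mul_nonneg m.cast_nonneg (hf.nonneg hx),
        mul_le_of_le_one_right m.cast_nonneg (hf.le_one hx)⟩) hf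
    simp only [ih] at h
    push_cast
    simp only [add_mul, one_mul]
    linarith

lemma natCast_mul_le_one {f : (Fin n → ℝ) → ℝ} (hf : IsMcNaughton n f) (m : ℕ)
    (h : ∀ x ∈ cube n, m * f x ≤ 1) : m * s f ≤ 1 := by
  rcases m with _ | m
  · simp
  rw [← hs.sum_layers_natCast_mul hf, sum_range_succ', sum_eq_zero fun j _ => hs.eq_zero
    (hf.clamp01_natCast_mul_sub _ _) fun x hx => clamp01_of_nonpos (by
      have := h x hx; push_cast at this ⊢; linarith [j.cast_nonneg (α := ℝ)]),
    zero_add]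
  exact hs.le_one (hf.clamp01_natCast_mul_sub _ _)

lemma natCast_mul_sub_le_one {f g : (Fin n → ℝ) → ℝ} (hf : IsMcNaughton n f)
    (hg : IsMcNaughton n g) (m : ℕ) (h : ∀ x ∈ cube n, m * (f x - g x) ≤ 1) :
    m * (s f - s g) ≤ 1 := by
  set t : (Fin n → ℝ) → ℝ := fun x => clamp01 (f x - g x)
  have ht : IsMcNaughton n t := isMcNaughton_clamp01 (hf.1.sub hg.1)
    (hf.isIntPiecewiseAffineOn.sub hg.isIntPiecewiseAffineOn)
  have hmt : m * s t ≤ 1 := hs.natCast_mul_le_one ht m fun x hx => by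
    rcases le_total (f x - g x) 0 with hfg | hfg
    · simp [t, clamp01_of_nonpos hfg]
    · rw [show t x = f x - g x from clamp01_of_mem hfg (by linarith [hf.le_one hx, hg.nonneg hx])]
      exact h x hx
  have hf_le : s f ≤ s g + s t :=
    (hs.mono hf (hg.oplus ht) fun x hx => by
      simp only [t]; unfold clamp01; grind [hf.le_one hx, hg.nonneg hx, hg.le_one hx]).trans
    (hs.oplus_le hg ht)
  nlinarith [m.cast_nonneg (α := ℝ)]

end IsState

instance : CompactSpace (cube n) := isCompact_iff_compactSpace.mp isCompact_Icc

/-- Equal to `1` on the grid cell `∏ᵢ [kᵢ / m, (kᵢ + 1) / m]` and to `0` wherever some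
`m * xᵢ` is at distance at least `1` from `[kᵢ, kᵢ + 1]`. -/
def cellBump (m : ℕ) (k : Fin n → ℤ) (x : Fin n → ℝ) : ℝ :=
  clamp01 (1 + ∑ i, min 0 (min (m * x i - k i) (k i + 1 - m * x i)))

lemma isMcNaughton_cellBump (m : ℕ) (k : Fin n → ℤ) : IsMcNaughton n (cellBump m k) := by
  refine isMcNaughton_clamp01 (Continuous.continuousOn (by fun_prop)) ?_
  have h₁ (i : Fin n) : IsIntPiecewiseAffineOn (cube n) fun x => m * x i - k i :=
    ((IsIntPiecewiseAffineOn.coord i).natCast_mul m).sub (.const (k i))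
  have h₂ (i : Fin n) : IsIntPiecewiseAffineOn (cube n) fun x => k i + 1 - m * x i := by
    simpa using (IsIntPiecewiseAffineOn.const (k i + 1)).sub
      ((IsIntPiecewiseAffineOn.coord i).natCast_mul m)
  simpa using (IsIntPiecewiseAffineOn.const 1).add
    (.sum univ fun i _ => (IsIntPiecewiseAffineOn.const 0).min ((h₁ i).min (h₂ i)))

lemma cellBump_eq_one {m : ℕ} {k : Fin n → ℤ} {x : Fin n → ℝ}
    (h : ∀ i, k i ≤ m * x i ∧ m * x i ≤ k i + 1) : cellBump m k x = 1 := by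
  refine clamp01_of_one_le ?_
  rw [sum_eq_zero fun i _ => min_eq_left (le_min (by linarith [h i]) (by linarith [h i]))]
  norm_num

lemma lt_of_cellBump_pos {m : ℕ} {k : Fin n → ℤ} {x : Fin n → ℝ} (h : 0 < cellBump m k x)
    (i : Fin n) : k i - 1 < m * x i ∧ m * x i < k i + 2 := by
  set a : Fin n → ℝ := fun i => min 0 (min (m * x i - k i) (k i + 1 - m * x i))
  have hsum : -1 < ∑ i, a i := by
    by_contra! hle
    exact h.ne' (clamp01_of_nonpos (by linarith))
  have hai : ∑ i, a i ≤ a i := by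
    have := single_le_sum (f := fun i => -a i) (fun j _ => by simp [a]) (mem_univ i)
    simp only [sum_neg_distrib] at this
    linarith
  have : -1 < a i := hsum.trans_le hai
  simp only [a, lt_min_iff] at this
  constructor <;> linarith [this.2.1, this.2.2]

theorem exists_isMcNaughton_eq_one_eq_zero {K₁ K₂ : Set (cube n)} (h₁ : IsClosed K₁)
    (h₂ : IsClosed K₂) (hd : Disjoint K₁ K₂) :
    ∃ h, IsMcNaughton n h ∧ (∀ x ∈ K₁, h x = 1) ∧ ∀ x ∈ K₂, h x = 0 := by
  obtain ⟨δ, hδ, hthick⟩ :=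
    h₁.isCompact.exists_thickening_subset_open h₂.isOpen_compl hd.subset_compl_right
  -- The bump of a cell of mesh `1 / m` meeting `K₁` vanishes at sup-distance `≥ 2 / m` from `K₁`.
  obtain ⟨m, hm⟩ := exists_nat_gt (2 / δ)
  have hm₀ : (0 : ℝ) < m := (div_pos two_pos hδ).trans hm
  set cell : (Fin n → ℝ) → Fin n → ℤ := fun x i => ⌊m * x i⌋
  have hcell : ∀ x i, (cell x i : ℝ) ≤ m * x i ∧ m * x i ≤ cell x i + 1 := fun x i =>
    ⟨Int.floor_le _, (Int.lt_floor_add_one _).le⟩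
  have hS : (cell '' (Subtype.val '' K₁)).Finite := by
    refine (Set.Finite.pi (t := fun _ => Set.Icc (0 : ℤ) m) fun _ => Set.finite_Icc _ _).subset ?_
    rintro _ ⟨_, ⟨x, -, rfl⟩, rfl⟩ i -
    have hx₀ : 0 ≤ m * x.1 i := mul_nonneg hm₀.le (x.2.1 i)
    have hx₁ : m * x.1 i ≤ m := mul_le_of_le_one_right hm₀.le (x.2.2 i)
    exact ⟨Int.floor_nonneg.2 hx₀, Int.floor_le_iff.2 (by push_cast; linarith)⟩
  refine ⟨fun x => clamp01 (∑ k ∈ hS.toFinset, cellBump m k x),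
    isMcNaughton_clamp01 (continuousOn_finsetSum _ fun k _ => (isMcNaughton_cellBump m k).1)
      (.sum _ fun k _ => (isMcNaughton_cellBump m k).isIntPiecewiseAffineOn), fun x hx => ?_,
    fun y hy => ?_⟩
  · refine clamp01_of_one_le ?_
    rw [← cellBump_eq_one (hcell x)]
    exact single_le_sum (f := fun k => cellBump m k x) (fun k _ => clamp01_nonneg _)
      (hS.mem_toFinset.2 ⟨x, ⟨x, hx, rfl⟩, rfl⟩)
  · refine clamp01_of_nonpos (sum_nonpos fun k hk => not_lt.1 fun hpos => ?_)
    obtain ⟨_, ⟨z, hz, rfl⟩, rfl⟩ := hS.mem_toFinset.1 hk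
    refine hthick (Metric.mem_thickening_iff.2 ⟨z, hz, ?_⟩) hy
    rw [Subtype.dist_eq, dist_pi_lt_iff hδ]
    intro i
    have hy' := lt_of_cellBump_pos hpos i
    have hz' := hcell z i
    have hlt : |m * y.1 i - m * z.1 i| < m * δ := by
      rw [abs_sub_lt_iff]
      constructor <;> linarith [(div_lt_iff₀ hδ).1 hm]
    rw [← mul_sub, abs_mul, abs_of_pos hm₀] at hlt
    rw [Real.dist_eq]
    exact lt_of_mul_lt_mul_left hlt hm₀.le

noncomputable def stateCapacity (s : ((Fin n → ℝ) → ℝ) → ℝ) (K : Set (cube n)) : ℝ :=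
  sInf (s '' {f | IsMcNaughton n f ∧ ∀ x ∈ K, 1 ≤ f x})

lemma le_stateCapacity {s : ((Fin n → ℝ) → ℝ) → ℝ} {K : Set (cube n)} {c : ℝ}
    (h : ∀ f, IsMcNaughton n f → (∀ x ∈ K, 1 ≤ f x) → c ≤ s f) : c ≤ stateCapacity s K :=
  le_csInf ⟨_, _, ⟨.one, fun _ _ => le_rfl⟩, rfl⟩ fun _ ⟨f, hf, hsf⟩ => hsf ▸ h f hf.1 hf.2

lemma exists_lt_stateCapacity_add (s : ((Fin n → ℝ) → ℝ) → ℝ) (K : Set (cube n)) {ε : ℝ}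
    (hε : 0 < ε) :
    ∃ f, IsMcNaughton n f ∧ (∀ x ∈ K, 1 ≤ f x) ∧ s f < stateCapacity s K + ε := by
  obtain ⟨_, ⟨f, hf, rfl⟩, hlt⟩ := Real.lt_sInf_add_pos
    (s := s '' {f | IsMcNaughton n f ∧ ∀ x ∈ K, 1 ≤ f x}) ⟨_, _, ⟨.one, fun _ _ => le_rfl⟩, rfl⟩ hε
  exact ⟨f, hf.1, hf.2, hlt⟩

namespace IsState

variable {s : ((Fin n → ℝ) → ℝ) → ℝ} (hs : IsState n s)
include hs

lemma stateCapacity_le {K : Set (cube n)} {f : (Fin n → ℝ) → ℝ} (hf : IsMcNaughton n f)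
    (h : ∀ x ∈ K, 1 ≤ f x) : stateCapacity s K ≤ s f :=
  csInf_le ⟨0, fun _ ⟨_, hg, hsg⟩ => hsg ▸ hs.nonneg hg.1⟩ ⟨f, ⟨hf, h⟩, rfl⟩

lemma stateCapacity_nonneg (K : Set (cube n)) : 0 ≤ stateCapacity s K :=
  le_stateCapacity fun _ hf _ => hs.nonneg hf

lemma stateCapacity_mono {K L : Set (cube n)} (h : K ⊆ L) :
    stateCapacity s K ≤ stateCapacity s L :=
  le_stateCapacity fun _ hf hL => hs.stateCapacity_le hf fun x hx => hL x (h hx)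

lemma stateCapacity_univ : stateCapacity s Set.univ = 1 :=
  le_antisymm (hs.2.1 ▸ hs.stateCapacity_le .one fun _ _ => le_rfl)
    (le_stateCapacity fun _ hf h => (hs.eq_one hf fun x hx =>
      le_antisymm (hf.le_one hx) (h ⟨x, hx⟩ trivial)).ge)

lemma stateCapacity_union_le (K L : Set (cube n)) :
    stateCapacity s (K ∪ L) ≤ stateCapacity s K + stateCapacity s L := by
  refine le_of_forall_pos_le_add fun ε hε => ?_
  obtain ⟨f, hf, hfK, hsf⟩ := exists_lt_stateCapacity_add s K (half_pos hε)
  obtain ⟨g, hg, hgL, hsg⟩ := exists_lt_stateCapacity_add s L (half_pos hε)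
  have h := hs.stateCapacity_le (K := K ∪ L) (hf.oplus hg) fun x hx => by
    refine (clamp01_of_one_le ?_).ge
    rcases hx with hx | hx
    · linarith [hfK x hx, hg.nonneg x.2]
    · linarith [hgL x hx, hf.nonneg x.2]
  linarith [hs.oplus_le hf hg]

lemma stateCapacity_union_of_disjoint {K L : Set (cube n)} (hK : IsClosed K) (hL : IsClosed L)
    (hd : Disjoint K L) : stateCapacity s (K ∪ L) = stateCapacity s K + stateCapacity s L := by
  refine le_antisymm (hs.stateCapacity_union_le K L) (le_stateCapacity fun f hf h => ?_)
  obtain ⟨u, hu, hu₁, hu₀⟩ := exists_isMcNaughton_eq_one_eq_zero hK hL hd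
  have hle : ∀ x ∈ cube n, clamp01 (f x + u x - 1) ≤ f x := fun x hx => by
    unfold clamp01; grind [hf.nonneg hx, hu.le_one hx]
  have hf₁ : ∀ x ∈ K ∪ L, f x = 1 := fun x hx => le_antisymm (hf.le_one x.2) (h x hx)
  have hK' := hs.stateCapacity_le (K := K) (hf.odot hu) fun x hx => by
    rw [hf₁ x (.inl hx), hu₁ x hx]; norm_num [clamp01_of_one_le]
  have hL' := hs.stateCapacity_le (K := L) (hf.sub (hf.odot hu) hle) fun x hx => by
    rw [hf₁ x (.inr hx), hu₀ x hx]; norm_num [clamp01_of_nonpos]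
  linarith [hs.map_sub hf (hf.odot hu) hle]

end IsState

noncomputable def stateContent {s : ((Fin n → ℝ) → ℝ) → ℝ} (hs : IsState n s) :
    Content (cube n) where
  toFun K := (stateCapacity s K).toNNReal
  mono' _ _ h := Real.toNNReal_mono (hs.stateCapacity_mono h)
  sup_disjoint' _ _ hd hK hL := by
    simp only [TopologicalSpace.Compacts.coe_sup, hs.stateCapacity_union_of_disjoint hK hL hd,
      Real.toNNReal_add (hs.stateCapacity_nonneg _) (hs.stateCapacity_nonneg _)]
  sup_le' _ _ := by
    simp only [TopologicalSpace.Compacts.coe_sup]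
    exact (Real.toNNReal_mono (hs.stateCapacity_union_le _ _)).trans Real.toNNReal_add_le

noncomputable def stateMeasure {s : ((Fin n → ℝ) → ℝ) → ℝ} (hs : IsState n s) :
    Measure (cube n) :=
  (stateContent hs).measure

namespace IsMcNaughton

variable {f : (Fin n → ℝ) → ℝ} (hf : IsMcNaughton n f) (μ : Measure (cube n)) [IsFiniteMeasure μ]
include hf

lemma continuous_restrict : Continuous fun x : cube n => f x := hf.1.domRestrict

lemma integrable : Integrable (fun x : cube n => f x) μ :=
  hf.continuous_restrict.integrable_of_hasCompactSupport (.of_compactSpace _)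

lemma measureReal_le_integral {O : Set (cube n)} (hO : MeasurableSet O) (h : ∀ x ∈ O, 1 ≤ f x) :
    μ.real O ≤ ∫ x, f x ∂μ := by
  rw [← integral_indicator_one hO]
  refine integral_mono ((integrable_const 1).indicator hO) (hf.integrable μ) fun x => ?_
  by_cases hx : x ∈ O
  · simpa [hx] using h x hx
  · simpa [hx] using hf.nonneg x.2

lemma integral_le_measureReal {O : Set (cube n)} (hO : MeasurableSet O)
    (h : ∀ x : cube n, 0 < f x → x ∈ O) : ∫ x, f x ∂μ ≤ μ.real O := by
  rw [← integral_indicator_one hO]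
  refine integral_mono (hf.integrable μ) ((integrable_const 1).indicator hO) fun x => ?_
  by_cases hx : x ∈ O
  · simpa [hx] using hf.le_one x.2
  · simpa [hx] using not_lt.1 (mt (h x) hx)

lemma natCast_mul_integral (m : ℕ) :
    m * ∫ x, f x ∂μ = ∑ j ∈ range m, ∫ x, clamp01 (m * f x - j) ∂μ := by
  rw [← integral_const_mul, ← integral_finsetSum _ fun j _ =>
    (hf.clamp01_natCast_mul_sub m j).integrable μ]
  exact integral_congr_ae (.of_forall fun x => (sum_range_clamp01_sub
    (mul_nonneg m.cast_nonneg (hf.nonneg x.2))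
    (mul_le_of_le_one_right m.cast_nonneg (hf.le_one x.2))).symm)

end IsMcNaughton

namespace IsState

variable {s : ((Fin n → ℝ) → ℝ) → ℝ} (hs : IsState n s) {g : (Fin n → ℝ) → ℝ}
include hs

lemma ofReal_stateCapacity_le_stateMeasure {K : Set (cube n)} (hK : IsClosed K) :
    ENNReal.ofReal (stateCapacity s K) ≤ stateMeasure hs K := by
  rw [stateMeasure, Content.measure_apply _ hK.measurableSet]
  exact (stateContent hs).le_outerMeasure_compacts ⟨K, hK.isCompact⟩

lemma stateMeasure_le_ofReal {O : Set (cube n)} (hO : IsOpen O) (hg : IsMcNaughton n g)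
    (h : ∀ x ∈ O, 1 ≤ g x) : stateMeasure hs O ≤ ENNReal.ofReal (s g) := by
  rw [stateMeasure, Content.measure_apply _ hO.measurableSet,
    Content.outerMeasure_of_isOpen _ _ hO]
  exact iSup₂_le fun K hKO =>
    ENNReal.ofReal_le_ofReal (hs.stateCapacity_le hg fun x hx => h x (hKO hx))

instance : IsProbabilityMeasure (stateMeasure hs) :=
  ⟨le_antisymm
    (by simpa [hs.2.1] using hs.stateMeasure_le_ofReal isOpen_univ .one fun _ _ => le_rfl)
    (by simpa [hs.stateCapacity_univ] using hs.ofReal_stateCapacity_le_stateMeasure isClosed_univ)⟩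

instance : (stateMeasure hs).Regular := Content.regular _

lemma measureReal_le_of_one_le {O : Set (cube n)} (hO : IsOpen O) (hg : IsMcNaughton n g)
    (h : ∀ x ∈ O, 1 ≤ g x) : (stateMeasure hs).real O ≤ s g :=
  ENNReal.toReal_le_of_le_ofReal (hs.nonneg hg) (hs.stateMeasure_le_ofReal hO hg h)

lemma le_measureReal_of_pos_imp_mem (hg : IsMcNaughton n g) {O : Set (cube n)}
    (h : ∀ x : cube n, 0 < g x → x ∈ O) : s g ≤ (stateMeasure hs).real O := by
  refine le_of_forall_natCast_mul_sub_le_one fun m hm => ?_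
  have hm₀ : (0 : ℝ) < m := by exact_mod_cast hm
  set K : Set (cube n) := {x | 1 ≤ m * g x}
  have hK : IsClosed K := isClosed_le continuous_const (continuous_const.mul hg.continuous_restrict)
  have hKO : K ⊆ O := fun x hx => h x (pos_of_mul_pos_right (one_pos.trans_le hx) hm₀.le)
  have hcap : s g - 1 / m ≤ stateCapacity s K := le_stateCapacity fun f hf hfK => by
    have := hs.natCast_mul_sub_le_one hg hf m fun x hx => by
      by_cases hxK : 1 ≤ m * g x
      · nlinarith [hfK ⟨x, hx⟩ hxK, hg.le_one hx]
      · nlinarith [hf.nonneg hx]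
    rw [sub_le_iff_le_add, ← sub_le_iff_le_add', le_div_iff₀' hm₀]
    exact this
  have hμ : stateCapacity s K ≤ (stateMeasure hs).real O :=
    (ENNReal.ofReal_le_iff_le_toReal (measure_ne_top _ _)).1
      ((hs.ofReal_stateCapacity_le_stateMeasure hK).trans (measure_mono hKO))
  rw [← le_div_iff₀' hm₀]
  linarith

lemma abs_natCast_mul_sub_integral_le {f : (Fin n → ℝ) → ℝ} (hf : IsMcNaughton n f) (m : ℕ) :
    |m * s f - m * ∫ x, f x ∂stateMeasure hs| ≤ 1 := by
  set μ := stateMeasure hs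
  set A : ℕ → Set (cube n) := fun j => {x | (j : ℝ) < m * f x}
  have hA (j : ℕ) : IsOpen (A j) :=
    isOpen_lt continuous_const (continuous_const.mul hf.continuous_restrict)
  set L : ℕ → (Fin n → ℝ) → ℝ := fun j x => clamp01 (m * f x - j)
  have hL (j : ℕ) : IsMcNaughton n (L j) := hf.clamp01_natCast_mul_sub m j
  have hL₁ (j : ℕ) : ∀ x ∈ A (j + 1), 1 ≤ L j x := fun x hx =>
    (clamp01_of_one_le (by
      have : ((j + 1 : ℕ) : ℝ) < m * f x := hx
      push_cast at this
      linarith)).ge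
  have hL₀ (j : ℕ) : ∀ x : cube n, 0 < L j x → x ∈ A j := fun x hx =>
    show (j : ℝ) < m * f x from not_le.1 fun hle => hx.ne' (clamp01_of_nonpos (sub_nonpos.2 hle))
  rw [← hs.sum_layers_natCast_mul hf, hf.natCast_mul_integral]
  refine (abs_sum_range_sub_sum_range_le (r := fun j => μ.real (A j)) m
    (fun j => ⟨hs.measureReal_le_of_one_le (hA _) (hL j) (hL₁ j),
      hs.le_measureReal_of_pos_imp_mem (hL j) (hL₀ j)⟩)
    (fun j => ⟨(hL j).measureReal_le_integral μ (hA _).measurableSet (hL₁ j),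
      (hL j).integral_le_measureReal μ (hA _).measurableSet (hL₀ j)⟩)).trans ?_
  linarith [measureReal_nonneg (μ := μ) (s := A m), measureReal_le_one (μ := μ) (s := A 0)]

theorem eq_integral_stateMeasure {f : (Fin n → ℝ) → ℝ} (hf : IsMcNaughton n f) :
    s f = ∫ x, f x ∂stateMeasure hs :=
  le_antisymm (le_of_forall_natCast_mul_sub_le_one fun m _ => by
      linarith [abs_le.1 (hs.abs_natCast_mul_sub_integral_le hf m)])
    (le_of_forall_natCast_mul_sub_le_one fun m _ => by
      linarith [abs_le.1 (hs.abs_natCast_mul_sub_integral_le hf m)])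

lemma stateMeasure_pos (hF : Faithful n s) {O : Set (cube n)} (hO : IsOpen O)
    (hne : O.Nonempty) : 0 < stateMeasure hs O := by
  obtain ⟨x₀, hx₀⟩ := hne
  obtain ⟨g, hg, hg₁, hg₀⟩ := exists_isMcNaughton_eq_one_eq_zero isClosed_singleton
    hO.isClosed_compl (Set.disjoint_singleton_left.2 (not_not.2 hx₀))
  have hsg : 0 < s g := (hs.nonneg hg).lt_of_ne' (hF g hg ⟨x₀, x₀.2, by simp [hg₁ x₀ rfl]⟩)
  have := hs.le_measureReal_of_pos_imp_mem hg fun x hx => by_contra fun hxO => hx.ne' (hg₀ x hxO)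
  exact (ENNReal.toReal_pos_iff.1 (hsg.trans_le this)).1

end IsState

lemma measure_le_of_forall_integral_eq {μ ν : Measure (cube n)} [IsFiniteMeasure μ]
    [IsFiniteMeasure ν] (h : ∀ f, IsMcNaughton n f → ∫ x, f x ∂μ = ∫ x, f x ∂ν) {F : Set (cube n)}
    (hF : IsClosed F) : μ F ≤ ν F := by
  rw [Set.measure_eq_iInf_isOpen F ν]
  refine le_iInf₂ fun U hFU => le_iInf fun hU => ?_
  obtain ⟨g, hg, hg₁, hg₀⟩ := exists_isMcNaughton_eq_one_eq_zero hF hU.isClosed_compl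
    (Set.disjoint_compl_right_iff_subset.2 hFU)
  have := ((hg.measureReal_le_integral μ hF.measurableSet fun x hx => (hg₁ x hx).ge).trans_eq
    (h g hg)).trans (hg.integral_le_measureReal ν hU.measurableSet fun x hx =>
      by_contra fun hxU => hx.ne' (hg₀ x hxU))
  exact (ENNReal.toReal_le_toReal (measure_ne_top _ _) (measure_ne_top _ _)).1 this

lemma eq_of_forall_integral_eq {μ ν : Measure (cube n)} [IsFiniteMeasure μ] [IsFiniteMeasure ν]
    (h : ∀ f, IsMcNaughton n f → ∫ x, f x ∂μ = ∫ x, f x ∂ν) : μ = ν := by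
  have hμν (F : Set (cube n)) (hF : IsClosed F) : μ F = ν F :=
    le_antisymm (measure_le_of_forall_integral_eq h hF)
      (measure_le_of_forall_integral_eq (fun f hf => (h f hf).symm) hF)
  refine ext_of_generate_finite _ ?_ isPiSystem_isClosed (fun F hF => hμν F hF)
    (hμν _ isClosed_univ)
  rw [BorelSpace.measurable_eq (α := cube n), borel_eq_generateFrom_isClosed]

lemma faithful_of_eq_integral {s : ((Fin n → ℝ) → ℝ) → ℝ} {μ : Measure (cube n)}
    [IsFiniteMeasure μ] [μ.IsOpenPosMeasure] (h : ∀ f, IsMcNaughton n f → s f = ∫ x, f x ∂μ) :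
    Faithful n s := by
  rintro f hf ⟨x, hx, hfx⟩
  rw [h f hf]
  exact (hf.continuous_restrict.integral_pos_of_hasCompactSupport_nonneg_nonzero
    (.of_compactSpace _) (fun y => hf.nonneg y.2) (x := ⟨x, hx⟩) hfx).ne'

theorem stmt7 (n : ℕ) (s : ((Fin n → ℝ) → ℝ) → ℝ) (hs : IsState n s) :
    Faithful n s ↔
      ∃! μ : Measure (cube n),
        IsProbabilityMeasure μ ∧ μ.Regular ∧
        (∀ O : Set (cube n), IsOpen O → O.Nonempty → 0 < μ O) ∧
        (∀ f, IsMcNaughton n f → s f = ∫ x, f ↑x ∂μ) := by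
  constructor
  · intro hF
    refine ⟨stateMeasure hs, ⟨inferInstance, inferInstance,
      fun _ hO hne => hs.stateMeasure_pos hF hO hne,
      fun _ hf => hs.eq_integral_stateMeasure hf⟩, ?_⟩
    rintro ν ⟨_, -, -, hν⟩
    exact eq_of_forall_integral_eq fun f hf => (hν f hf).symm.trans (hs.eq_integral_stateMeasure hf)
  · rintro ⟨μ, ⟨_, -, hpos, hμ⟩, -⟩
    have : μ.IsOpenPosMeasure := ⟨fun O hO hne => (hpos O hO hne).ne'⟩
    exact faithful_of_eq_integral hμ
end

section
/- Let μ be a regular Borel probability measure on [0,1]^n. Then ∫_{[0,1]^n} f dμ > 0 for every McNaughton function f on [0,1]^n that is not identically 0 if and only if μ is strictly positive, i.e., μ(O) > 0 for every nonempty open subset O of [0,1]^n. -/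
open Set MeasureTheory

/-!
A nonnegative continuous function on the compact cube that is nonzero somewhere is positive on
a nonempty open set, so its integral against a strictly positive finite measure is positive.

Conversely, McNaughton functions separate points from complements of open sets. For a point `p`
and a large integer `k`, the truncated pyramid
`min 1 (max 0 (n + 1 - 2 * ∑ i, |k * x i - round (k * p i)|))` equals `1` at `p` and vanishes
outside a small neighbourhood of `p`; it is McNaughton because piecewise integer-affine functions
are closed under sums, integer multiples, `max` and `min`. Such a function supported in an open
null set would have integral zero.
-/

section PiecewiseIntAffine

variable {ι : Type*} [Fintype ι]

/-- The affine function `x ↦ b + ∑ i, a i * x i` encoded by `q = (a, b)`. -/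
def intAffine (q : (ι → ℤ) × ℤ) (x : ι → ℝ) : ℝ := q.2 + ∑ i, (q.1 i : ℝ) * x i

@[simp]
lemma intAffine_add (q q' : (ι → ℤ) × ℤ) (x : ι → ℝ) :
    intAffine (q + q') x = intAffine q x + intAffine q' x := by
  simp only [intAffine, Prod.fst_add, Prod.snd_add, Pi.add_apply, Int.cast_add, add_mul,
    Finset.sum_add_distrib]
  ring

@[simp]
lemma intAffine_smul (k : ℤ) (q : (ι → ℤ) × ℤ) (x : ι → ℝ) :
    intAffine (k • q) x = k * intAffine q x := by
  simp only [intAffine, Prod.smul_fst, Prod.smul_snd, Pi.smul_apply, smul_eq_mul, Int.cast_mul,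
    mul_add, Finset.mul_sum, mul_assoc]

def IsPiecewiseIntAffine (s : Set (ι → ℝ)) (f : (ι → ℝ) → ℝ) : Prop :=
  ∃ P : Finset ((ι → ℤ) × ℤ), ∀ x ∈ s, ∃ q ∈ P, f x = intAffine q x

variable {s : Set (ι → ℝ)} {f g : (ι → ℝ) → ℝ}

lemma isPiecewiseIntAffine_intAffine (q : (ι → ℤ) × ℤ) : IsPiecewiseIntAffine s (intAffine q) :=
  ⟨{q}, fun _ _ => ⟨q, Finset.mem_singleton_self q, rfl⟩⟩

lemma isPiecewiseIntAffine_const (c : ℤ) : IsPiecewiseIntAffine s fun _ => (c : ℝ) := by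
  convert isPiecewiseIntAffine_intAffine (s := s) (0, c) using 1
  ext x
  simp [intAffine]

lemma isPiecewiseIntAffine_apply [DecidableEq ι] (i : ι) :
    IsPiecewiseIntAffine s fun x => x i := by
  convert isPiecewiseIntAffine_intAffine (s := s) (Pi.single i 1, 0) using 1
  ext x
  simp [intAffine, Pi.single_apply]

namespace IsPiecewiseIntAffine

lemma add (hf : IsPiecewiseIntAffine s f) (hg : IsPiecewiseIntAffine s g) :
    IsPiecewiseIntAffine s fun x => f x + g x := by
  classical
  obtain ⟨P, hP⟩ := hf
  obtain ⟨Q, hQ⟩ := hg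
  refine ⟨Finset.image₂ (· + ·) P Q, fun x hx => ?_⟩
  obtain ⟨p, hp, hfx⟩ := hP x hx
  obtain ⟨q, hq, hgx⟩ := hQ x hx
  exact ⟨p + q, Finset.mem_image₂_of_mem hp hq, by simp [hfx, hgx]⟩

lemma const_mul (k : ℤ) (hf : IsPiecewiseIntAffine s f) :
    IsPiecewiseIntAffine s fun x => k * f x := by
  classical
  obtain ⟨P, hP⟩ := hf
  refine ⟨P.image (k • ·), fun x hx => ?_⟩
  obtain ⟨p, hp, hfx⟩ := hP x hx
  exact ⟨k • p, Finset.mem_image_of_mem _ hp, by rw [intAffine_smul, ← hfx]⟩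

lemma sub (hf : IsPiecewiseIntAffine s f) (hg : IsPiecewiseIntAffine s g) :
    IsPiecewiseIntAffine s fun x => f x - g x := by
  simpa [sub_eq_add_neg] using hf.add (hg.const_mul (-1))

lemma sup (hf : IsPiecewiseIntAffine s f) (hg : IsPiecewiseIntAffine s g) :
    IsPiecewiseIntAffine s fun x => max (f x) (g x) := by
  classical
  obtain ⟨P, hP⟩ := hf
  obtain ⟨Q, hQ⟩ := hg
  refine ⟨P ∪ Q, fun x hx => ?_⟩
  obtain ⟨p, hp, hfx⟩ := hP x hx
  obtain ⟨q, hq, hgx⟩ := hQ x hx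
  rcases le_total (f x) (g x) with h | h
  · exact ⟨q, Finset.mem_union_right _ hq, (max_eq_right h).trans hgx⟩
  · exact ⟨p, Finset.mem_union_left _ hp, (max_eq_left h).trans hfx⟩

lemma inf (hf : IsPiecewiseIntAffine s f) (hg : IsPiecewiseIntAffine s g) :
    IsPiecewiseIntAffine s fun x => min (f x) (g x) := by
  have := (hf.const_mul (-1)).sup (hg.const_mul (-1))
  simpa [← neg_inf] using this.const_mul (-1)

lemma abs (hf : IsPiecewiseIntAffine s f) : IsPiecewiseIntAffine s fun x => |f x| := by
  simpa [abs_eq_max_neg] using hf.sup (hf.const_mul (-1))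

end IsPiecewiseIntAffine

lemma isPiecewiseIntAffine_finset_sum {α : Type*} (t : Finset α) {f : α → (ι → ℝ) → ℝ}
    (hf : ∀ a ∈ t, IsPiecewiseIntAffine s (f a)) :
    IsPiecewiseIntAffine s fun x => ∑ a ∈ t, f a x := by
  classical
  induction t using Finset.induction_on with
  | empty => simpa using isPiecewiseIntAffine_const (s := s) 0
  | insert a t ha ih =>
    simp_rw [Finset.sum_insert ha]
    exact (hf a (t.mem_insert_self a)).add (ih fun b hb => hf b (Finset.mem_insert_of_mem hb))

lemma IsPiecewiseIntAffine.exists_fin (hf : IsPiecewiseIntAffine s f) :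
    ∃ (m : ℕ) (a : Fin m → ι → ℤ) (b : Fin m → ℤ),
      ∀ x ∈ s, ∃ j : Fin m, f x = (b j : ℝ) + ∑ i, (a j i : ℝ) * x i := by
  obtain ⟨P, hP⟩ := hf
  refine ⟨P.card, fun j => (P.equivFin.symm j).1.1, fun j => (P.equivFin.symm j).1.2,
    fun x hx => ?_⟩
  obtain ⟨q, hq, hfx⟩ := hP x hx
  exact ⟨P.equivFin ⟨q, hq⟩, by simpa [intAffine] using hfx⟩

end PiecewiseIntAffine

section Tent

variable {ι : Type*} [Fintype ι]

/-- A pyramid of height `card ι + 1`, cut off at `1`, around the lattice point `c / k`. -/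
def tent (k : ℤ) (c : ι → ℤ) (x : ι → ℝ) : ℝ :=
  min 1 (max 0 (Fintype.card ι + 1 - 2 * ∑ i, |k * x i - c i|))

variable (k : ℤ) (c : ι → ℤ)

lemma continuous_tent : Continuous (tent k c) := by
  unfold tent
  fun_prop

lemma tent_mem_Icc (x : ι → ℝ) : tent k c x ∈ Icc 0 1 :=
  ⟨le_min zero_le_one (le_max_left _ _), min_le_left _ _⟩

lemma isPiecewiseIntAffine_tent [DecidableEq ι] (s : Set (ι → ℝ)) :
    IsPiecewiseIntAffine s (tent k c) := by
  have := (isPiecewiseIntAffine_const (s := s) 1).inf ((isPiecewiseIntAffine_const 0).sup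
    ((isPiecewiseIntAffine_const (Fintype.card ι + 1)).sub
      ((isPiecewiseIntAffine_finset_sum Finset.univ fun i _ =>
        (((isPiecewiseIntAffine_apply i).const_mul k).sub
          (isPiecewiseIntAffine_const (c i))).abs).const_mul 2)))
  convert this using 2 with x
  simp [tent]

lemma tent_eq_one {p : ι → ℝ} (hp : ∀ i, |k * p i - c i| ≤ 1 / 2) : tent k c p = 1 := by
  have hsum : ∑ i, |k * p i - c i| ≤ Fintype.card ι * (1 / 2) := by
    simpa using Finset.sum_le_sum fun i (_ : i ∈ Finset.univ) => hp i
  exact min_eq_left (le_max_of_le_right (by linarith))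

lemma two_mul_abs_lt_of_tent_ne_zero {x : ι → ℝ} (hx : tent k c x ≠ 0) (i : ι) :
    2 * |k * x i - c i| < Fintype.card ι + 1 := by
  by_contra! h
  have hle : |k * x i - c i| ≤ ∑ j, |k * x j - c j| :=
    Finset.single_le_sum (f := fun j => |k * x j - c j|) (fun j _ => abs_nonneg _)
      (Finset.mem_univ i)
  exact hx (by rw [tent, max_eq_left (by linarith), min_eq_right zero_le_one])

end Tent

lemma isMcNaughton_tent {n : ℕ} (k : ℤ) (c : Fin n → ℤ) : IsMcNaughton n (tent k c) :=
  ⟨(continuous_tent k c).continuousOn, fun x _ => tent_mem_Icc k c x,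
    (isPiecewiseIntAffine_tent k c _).exists_fin⟩

lemma exists_isMcNaughton_eq_one_support_subset_ball {n : ℕ} (p : Fin n → ℝ) {ε : ℝ}
    (hε : 0 < ε) : ∃ f, IsMcNaughton n f ∧ f p = 1 ∧ Function.support f ⊆ Metric.ball p ε := by
  obtain ⟨k, hk⟩ := exists_int_gt ((n + 2) / (2 * ε))
  have hkε : (n + 2) / 2 < k * ε := by
    rw [div_lt_iff₀ (by positivity)] at hk
    linarith
  have hk0 : (0 : ℝ) < k := lt_trans (by positivity) hk
  set c : Fin n → ℤ := fun i => round (k * p i)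
  have hround : ∀ i, |k * p i - c i| ≤ 1 / 2 := fun i => abs_sub_round _
  refine ⟨tent k c, isMcNaughton_tent k c, tent_eq_one k c hround, fun x hx => ?_⟩
  rw [Metric.mem_ball, dist_pi_lt_iff hε]
  intro i
  have hx_i := two_mul_abs_lt_of_tent_ne_zero k c hx i
  rw [Fintype.card_fin] at hx_i
  have : k * dist (x i) (p i) < k * ε := calc
    k * dist (x i) (p i) = |k * (x i - p i)| := by rw [abs_mul, abs_of_pos hk0, Real.dist_eq]
    _ = |(k * x i - c i) - (k * p i - c i)| := by ring_nf
    _ ≤ |k * x i - c i| + |k * p i - c i| := abs_sub _ _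
    _ < k * ε := by linarith [hround i]
  exact lt_of_mul_lt_mul_left this hk0.le

lemma isCompact_cube (n : ℕ) : IsCompact (cube n) := isCompact_Icc

lemma ContinuousOn.integral_pos_of_isCompact {X : Type*} [TopologicalSpace X]
    [MeasurableSpace X] [OpensMeasurableSpace X] {s : Set X} (hs : IsCompact s)
    {μ : Measure s} [IsFiniteMeasure μ] [μ.IsOpenPosMeasure] {f : X → ℝ} (hf : ContinuousOn f s)
    (hf0 : ∀ x ∈ s, 0 ≤ f x) {x : X} (hx : x ∈ s) (hfx : f x ≠ 0) : 0 < ∫ y, f y ∂μ :=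
  have := isCompact_iff_compactSpace.mp hs
  hf.domRestrict.integral_pos_of_hasCompactSupport_nonneg_nonzero (x := ⟨x, hx⟩)
    (HasCompactSupport.of_compactSpace _) (fun y => hf0 y y.2) hfx

lemma isOpenPosMeasure_of_forall_isMcNaughton_integral_pos {n : ℕ} {μ : Measure (cube n)}
    (H : ∀ f, IsMcNaughton n f → (∃ x ∈ cube n, f x ≠ 0) → 0 < ∫ x, f ↑x ∂μ) :
    μ.IsOpenPosMeasure := by
  refine ⟨fun O hO ⟨p, hp⟩ hO0 => ?_⟩
  obtain ⟨ε, hε, hball⟩ := Metric.isOpen_iff.mp hO p hp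
  obtain ⟨f, hf, hfp, hsupp⟩ := exists_isMcNaughton_eq_one_support_subset_ball (p : Fin n → ℝ) hε
  have hf0 : ∫ x, f ↑x ∂μ = 0 :=
    integral_eq_zero_of_ae (measure_mono_null (fun x hx => hball (hsupp hx)) hO0)
  exact (H f hf ⟨p, p.2, by simp [hfp]⟩).ne' hf0

theorem stmt8_general (n : ℕ) (μ : Measure (cube n)) (hprob : IsProbabilityMeasure μ) :
    (∀ f, IsMcNaughton n f → (∃ x ∈ cube n, f x ≠ 0) → 0 < ∫ x, f ↑x ∂μ) ↔
    (∀ O : Set (cube n), IsOpen O → O.Nonempty → 0 < μ O) := by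
  have hopen : (∀ O : Set (cube n), IsOpen O → O.Nonempty → 0 < μ O) ↔ μ.IsOpenPosMeasure :=
    ⟨fun h => ⟨fun O hO hne => (h O hO hne).ne'⟩,
      fun h O hO hne => pos_iff_ne_zero.2 (h.open_pos O hO hne)⟩
  rw [hopen]
  refine ⟨isOpenPosMeasure_of_forall_isMcNaughton_integral_pos, fun _ f hf hne => ?_⟩
  obtain ⟨x, hx, hfx⟩ := hne
  exact hf.1.integral_pos_of_isCompact (isCompact_cube n) (fun y hy => (hf.2.1 y hy).1) hx hfx

theorem stmt8 (n : ℕ) (μ : Measure (cube n)) (hprob : IsProbabilityMeasure μ)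
    (hreg : μ.Regular) :
    (∀ f, IsMcNaughton n f → (∃ x ∈ cube n, f x ≠ 0) → 0 < ∫ x, f ↑x ∂μ) ↔
    (∀ O : Set (cube n), IsOpen O → O.Nonempty → 0 < μ O) :=
  stmt8_general n μ hprob
end

section
/- Let f_1, …, f_k be McNaughton functions on [0,1]^n, let C_Φ ⊆ ℝ^k be the convex hull of {(f_1(x), …, f_k(x)) : x ∈ [0,1]^n}, and let β be a book on f_1, …, f_k. Then β is coherent if and only if the point (β_1, …, β_k) belongs to C_Φ. -/
open Set MeasureTheory

/-!
Stakes `σ` act on books through the linear form `σ ⬝ᵥ ·`, and `β` is incoherent exactly when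
some such form is strictly smaller at `β` than at every point of the image `S` of the cube.
If `β` lies in the convex hull of `S`, this is impossible by the minimum principle for linear
forms. If `β` lies outside, Hahn–Banach separates it strictly from the hull, which is closed:
by Carathéodory it is the continuous image of a simplex times finitely many copies of the
compact set `S`.
-/

section Caratheodory

open Module Function

variable {E : Type*} [AddCommGroup E] [Module ℝ E] [FiniteDimensional ℝ E]

/-- Carathéodory's theorem, padded with zero weights to exactly `finrank ℝ E + 1` points. -/
theorem convexHull_eq_image_stdSimplex (s : Set E) :
    convexHull ℝ s =
      (fun p : (Fin (finrank ℝ E + 1) → ℝ) × (Fin (finrank ℝ E + 1) → E) => ∑ i, p.1 i • p.2 i) ''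
        (stdSimplex ℝ _ ×ˢ univ.pi fun _ => s) := by
  refine Subset.antisymm (fun x hx => ?_) ?_
  · obtain ⟨y₀, hy₀⟩ := convexHull_nonempty_iff.1 ⟨x, hx⟩
    obtain ⟨ι, _, z, w, hzs, hz, hw_pos, hw_sum, rfl⟩ := eq_pos_convex_span_of_mem_convexHull hx
    have hcard : Fintype.card ι ≤ Fintype.card (Fin (finrank ℝ E + 1)) := by
      simpa using hz.card_le_finrank_succ.trans (Nat.succ_le_succ (Submodule.finrank_le _))
    obtain ⟨e⟩ := Embedding.nonempty_of_card_le hcard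
    have hw_out (j) (hj : j ∉ range e) : extend e w 0 j = 0 :=
      extend_apply' _ _ _ (by simpa using hj)
    refine ⟨(extend e w 0, extend e z fun _ => y₀), ⟨⟨fun j => ?_, ?_⟩, fun j _ => ?_⟩, ?_⟩
    · dsimp only
      rw [extend_def]
      split_ifs
      exacts [(hw_pos _).le, le_rfl]
    · rw [← hw_sum]
      exact (Fintype.sum_of_injective e e.injective w _ hw_out
        fun i => (e.injective.extend_apply ..).symm).symm
    · dsimp only
      rw [extend_def]
      split_ifs
      exacts [hzs (mem_range_self _), hy₀]
    · refine (Fintype.sum_of_injective e e.injective _ _ (fun j hj => ?_) fun i => ?_).symm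
      · dsimp only
        rw [hw_out j hj, zero_smul]
      · simp only [e.injective.extend_apply]
  · rintro _ ⟨⟨w, z⟩, ⟨hw, hz⟩, rfl⟩
    exact (convex_convexHull ℝ s).sum_mem (fun i _ => hw.1 i) hw.2
      fun i _ => subset_convexHull ℝ s (hz i (mem_univ i))

variable [TopologicalSpace E] [ContinuousAdd E] [ContinuousSMul ℝ E]

theorem IsCompact.convexHull {s : Set E} (hs : IsCompact s) : IsCompact (convexHull ℝ s) := by
  rw [convexHull_eq_image_stdSimplex]
  exact (IsCompact.prod (isCompact_stdSimplex ℝ _) (isCompact_univ_pi fun _ => hs)).image <|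
    continuous_finsetSum _ fun i _ =>
      ((continuous_apply i).comp continuous_fst).smul ((continuous_apply i).comp continuous_snd)

end Caratheodory

open Matrix

theorem mem_convexHull_iff_forall_exists_dotProduct_le {ι : Type*} [Fintype ι]
    {S : Set (ι → ℝ)} (hS : IsClosed (convexHull ℝ S)) {β : ι → ℝ} :
    β ∈ convexHull ℝ S ↔ ∀ σ : ι → ℝ, ∃ y ∈ S, σ ⬝ᵥ y ≤ σ ⬝ᵥ β := by
  refine ⟨fun hβ σ => ?_, fun h => ?_⟩
  · simpa using ((dotProductBilin ℝ ℝ σ).concaveOn convex_univ).exists_le_of_mem_convexHull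
      (subset_univ S) hβ
  · classical
    by_contra hβ
    obtain ⟨φ, u, hφβ, hφS⟩ := geometric_hahn_banach_point_closed (convex_convexHull ℝ S) hS hβ
    have hφ (y : ι → ℝ) : φ y = (fun i => φ (Pi.single i 1)) ⬝ᵥ y := by
      conv_lhs => rw [pi_eq_sum_univ' y]
      simp [dotProduct, mul_comm]
    obtain ⟨y, hyS, hy⟩ := h fun i => φ (Pi.single i 1)
    have hφy := hφS y (subset_convexHull ℝ S hyS)
    rw [← hφ, ← hφ] at hy
    linarith

theorem coherent_iff_forall_exists_dotProduct_le {n k : ℕ} {f : Fin k → (Fin n → ℝ) → ℝ}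
    {β : Fin k → ℝ} :
    Coherent n k f β ↔ ∀ σ, ∃ y ∈ (fun x i => f i x) '' cube n, σ ⬝ᵥ y ≤ σ ⬝ᵥ β := by
  simp only [Coherent, exists_mem_image, ← sub_nonneg (b := _ ⬝ᵥ _), ← dotProduct_sub]
  rfl

theorem stmt11_general (n k : ℕ) (f : Fin k → (Fin n → ℝ) → ℝ) (hf : ∀ i, IsMcNaughton n (f i))
    (β : Fin k → ℝ) :
    Coherent n k f β ↔ β ∈ convexHull ℝ ((fun x => fun i => f i x) '' cube n) := by
  have hcont : ContinuousOn (fun x i => f i x) (cube n) := continuousOn_pi.2 fun i => (hf i).1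
  have hcube : IsCompact (cube n) := isCompact_Icc
  have hclosed := (hcube.image_of_continuousOn hcont).convexHull.isClosed
  rw [coherent_iff_forall_exists_dotProduct_le,
    mem_convexHull_iff_forall_exists_dotProduct_le hclosed]

theorem stmt11 (n k : ℕ) (f : Fin k → (Fin n → ℝ) → ℝ) (hf : ∀ i, IsMcNaughton n (f i))
    (β : Fin k → ℝ) (hβ : ∀ i, β i ∈ Set.Icc (0 : ℝ) 1) :
    Coherent n k f β ↔ β ∈ convexHull ℝ ((fun x => fun i => f i x) '' cube n) :=
  stmt11_general n k f hf β
end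

section
/- Let f_1, …, f_k and g be McNaughton functions on [0,1]^n, with g neither identically 0 nor identically 1, and let β be a strictly coherent book on f_1, …, f_k. Then there exists α with 0 < α < 1 such that the book β' on f_1, …, f_k, g defined by β'_i = β_i for i = 1, …, k and β'(g) = α is strictly coherent. -/
/-!
Strict coherence of `β` says that no linear functional separates `β` properly from the set `S`
of outcome vectors `(f₁ x, …, f_k x)`, i.e. `β` lies in the relative interior of the closed
convex hull `K` of `S`. Adjoining `g` lifts `S` to `S' ⊆ ℝ^{k+1}` projecting onto `S`, and the
closed convex hull `K'` of `S'` projects onto `K`. The fibre of `K'` over `β` is a compact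
interval; its midpoint `(β, α)` is a relative interior point of `K'`, since any `q ∈ K'` can be
pushed through `β` inside `K` and then through the midpoint inside the fibre. Finally, a relative
interior point cannot have last coordinate `0` (resp. `1`) unless `g` vanishes (resp. equals `1`)
on the whole cube.
-/

open Set MeasureTheory

open Topology
open scoped Pointwise

section Algebraic

variable {E F : Type*} [AddCommGroup E] [Module ℝ E] [AddCommGroup F] [Module ℝ F]

def NoProperSeparation (S : Set E) (p : E) : Prop :=
  ∀ ψ : E →ₗ[ℝ] ℝ, (∀ y ∈ S, ψ p ≤ ψ y) → ∀ y ∈ S, ψ y ≤ ψ p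

/-- For convex `K` in finite dimensions this characterizes the relative interior
(Rockafellar, *Convex Analysis*, Thm. 6.4). -/
def IsRelInternalPoint (K : Set E) (p : E) : Prop :=
  ∀ q ∈ K, ∃ s : ℝ, 0 < s ∧ p + s • (p - q) ∈ K

theorem IsRelInternalPoint.noProperSeparation {K : Set E} {p : E}
    (h : IsRelInternalPoint K p) : NoProperSeparation K p := by
  intro ψ hψ q hq
  obtain ⟨s, hs, hmem⟩ := h q hq
  have := hψ _ hmem
  rw [map_add, map_smul, map_sub, smul_eq_mul] at this
  nlinarith

theorem NoProperSeparation.lt_of_forall_le {S : Set E} {p : E} (h : NoProperSeparation S p)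
    {ψ : E →ₗ[ℝ] ℝ} {c : ℝ} (hc : ∀ y ∈ S, c ≤ ψ y) (hne : ∃ y ∈ S, ψ y ≠ c) :
    c < ψ p := by
  by_contra! hp
  obtain ⟨y, hy, hyc⟩ := hne
  exact hyc (le_antisymm ((h ψ (fun z hz => hp.trans (hc z hz)) y hy).trans hp) (hc y hy))

theorem IsRelInternalPoint.of_image_of_fiber (π : E →ₗ[ℝ] F) {K : Set E} (hK : Convex ℝ K)
    {r : E} (himage : IsRelInternalPoint (π '' K) (π r))
    (hfiber : IsRelInternalPoint {z ∈ K | π z = π r} r) : IsRelInternalPoint K r := by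
  intro q hq
  obtain ⟨s, hs, q', hq', hπq'⟩ := himage (π q) (mem_image_of_mem π hq)
  have h1s : 1 + s ≠ 0 := by positivity
  set m := (s / (1 + s)) • q + (1 / (1 + s)) • q'
  have hm : m ∈ K := hK hq hq' (by positivity) (by positivity) (by field_simp; ring)
  have hπm : π m = π r := by
    simp only [m, map_add, map_smul, hπq']
    match_scalars <;> field_simp
    ring
  obtain ⟨u, hu, hv, -⟩ := hfiber m ⟨hm, hπm⟩
  have h1us : 1 + u + s ≠ 0 := by positivity
  -- `r` is a proper convex combination of `q`, `q'` and `v = r + u • (r - m)`;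
  -- the extension factor is the weight of `q` divided by the remaining weight.
  refine ⟨u * s / (1 + u + s), by positivity, ?_⟩
  convert hK hv hq' (a := (1 + s) / (1 + u + s)) (b := u / (1 + u + s)) (by positivity)
    (by positivity) (by field_simp; ring) using 1
  simp only [m]
  match_scalars <;> field_simp <;> ring

end Algebraic

section Topological

variable {E F : Type*} [NormedAddCommGroup E] [NormedSpace ℝ E]
  [NormedAddCommGroup F] [NormedSpace ℝ F]

theorem Bornology.IsBounded.isCompact_closedConvexHull [FiniteDimensional ℝ E] {S : Set E}
    (hS : IsBounded S) : IsCompact (closedConvexHull ℝ S) := by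
  rw [closedConvexHull_eq_closure_convexHull]
  exact (isBounded_convexHull.2 hS).isCompact_closure

theorem LinearMap.image_closedConvexHull [FiniteDimensional ℝ E] (π : E →ₗ[ℝ] F) {S : Set E}
    (hS : Bornology.IsBounded S) :
    π '' closedConvexHull ℝ S = closedConvexHull ℝ (π '' S) := by
  have hπ : Continuous π := LinearMap.continuous_of_finiteDimensional π
  refine Subset.antisymm (image_subset_iff.2 ?_) ?_
  · exact closedConvexHull_min (fun y hy => subset_closedConvexHull (mem_image_of_mem π hy))
      (convex_closedConvexHull.linear_preimage π) (isClosed_closedConvexHull.preimage hπ)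
  · exact closedConvexHull_min (image_mono subset_closedConvexHull)
      (convex_closedConvexHull.linear_image π) (hS.isCompact_closedConvexHull.image hπ).isClosed

theorem NoProperSeparation.mem_closedConvexHull {S : Set E} {p : E}
    (h : NoProperSeparation S p) (hS : S.Nonempty) : p ∈ closedConvexHull ℝ S := by
  by_contra hp
  obtain ⟨φ, u, hφ, hu⟩ :=
    geometric_hahn_banach_closed_point convex_closedConvexHull isClosed_closedConvexHull hp
  have hφS : ∀ y ∈ S, φ y < u := fun y hy => hφ y (subset_closedConvexHull hy)
  obtain ⟨y, hy⟩ := hS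
  have := h (-φ.toLinearMap) (fun z hz => by simpa using ((hφS z hz).trans hu).le) y hy
  simp only [LinearMap.neg_apply, ContinuousLinearMap.coe_coe, neg_le_neg_iff] at this
  linarith [hφS y hy]

theorem noProperSeparation_closedConvexHull_iff [FiniteDimensional ℝ E] {S : Set E} {p : E} :
    NoProperSeparation (closedConvexHull ℝ S) p ↔ NoProperSeparation S p := by
  have hull_le : ∀ (ψ : E →ₗ[ℝ] ℝ) c, (∀ y ∈ S, c ≤ ψ y) →
      ∀ y ∈ closedConvexHull ℝ S, c ≤ ψ y := fun ψ c hc =>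
    closedConvexHull_min hc (convex_halfSpace_ge ψ.isLinear c)
      (isClosed_le continuous_const (LinearMap.continuous_of_finiteDimensional ψ))
  refine ⟨fun h ψ hψ y hy => h ψ (hull_le ψ _ hψ) y (subset_closedConvexHull hy),
    fun h ψ hψ => ?_⟩
  have hψS y (hy : y ∈ S) : -ψ p ≤ -ψ y :=
    neg_le_neg (h ψ (fun z hz => hψ z (subset_closedConvexHull hz)) y hy)
  simpa using hull_le (-ψ) (-ψ p) (by simpa using hψS)

theorem isRelInternalPoint_of_mem_interior {K : Set E} {p : E} (hp : p ∈ interior K) :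
    IsRelInternalPoint K p := by
  intro q _
  have hcont : Continuous fun s : ℝ => p + s • (p - q) := by fun_prop
  have hev : ∀ᶠ s in 𝓝 (0 : ℝ), p + s • (p - q) ∈ K :=
    hcont.continuousAt.preimage_mem_nhds (by simpa using mem_interior_iff_mem_nhds.1 hp)
  obtain ⟨s, hsK, hs⟩ := (hev.filter_mono nhdsWithin_le_nhds |>.and self_mem_nhdsWithin).exists
    (f := 𝓝[>] (0 : ℝ))
  exact ⟨s, hs, hsK⟩

theorem Convex.exists_forall_le_of_notMem_interior {K : Set E} (hK : Convex ℝ K)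
    (hint : (interior K).Nonempty) {p : E} (hp : p ∉ interior K) :
    ∃ φ : E →L[ℝ] ℝ, (∀ y ∈ K, φ y ≤ φ p) ∧ ∃ y ∈ K, φ y < φ p := by
  obtain ⟨φ, hφ⟩ := geometric_hahn_banach_open_point hK.interior isOpen_interior hp
  refine ⟨φ, fun y hy => ?_, hint.imp fun y hy => ⟨interior_subset hy, hφ y hy⟩⟩
  have hy' : y ∈ closure (interior K) := by
    rw [hK.closure_interior_eq_closure_of_nonempty_interior hint]
    exact subset_closure hy
  exact closure_minimal (fun z hz => (hφ z hz).le) (isClosed_le φ.continuous continuous_const) hy'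

theorem NoProperSeparation.isRelInternalPoint_zero [FiniteDimensional ℝ E] {L : Set E}
    (hL : Convex ℝ L) (h0 : (0 : E) ∈ L) (h : NoProperSeparation L 0) :
    IsRelInternalPoint L 0 := by
  set W := Submodule.span ℝ L
  set L₁ : Set W := (↑) ⁻¹' L
  have h0₁ : (0 : W) ∈ L₁ := h0
  have hL₁ : Convex ℝ L₁ := hL.linear_preimage W.subtype
  have hspan : affineSpan ℝ L₁ = ⊤ := by
    rw [AffineSubspace.affineSpan_eq_top_iff_vectorSpan_eq_top_of_nonempty ℝ W W ⟨0, h0₁⟩,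
      vectorSpan_eq_span_vsub_set_right (k := ℝ) h0₁]
    simp only [vsub_eq_sub, sub_zero, image_id']
    exact Submodule.span_span_coe_preimage
  -- Relative to `W`, a boundary point `0` would have a supporting functional that is not
  -- constant on `L₁`; extended to `E`, it would contradict `h`.
  have hint₁ : (0 : W) ∈ interior L₁ := by
    by_contra h0int
    obtain ⟨φ, hφ, y, hy, hyφ⟩ := hL₁.exists_forall_le_of_notMem_interior
      (hL₁.interior_nonempty_iff_affineSpan_eq_top.2 hspan) h0int
    obtain ⟨ψ, hψ⟩ := LinearMap.exists_extend (-φ.toLinearMap)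
    have hψW : ∀ w : W, ψ w = -φ w := fun w => LinearMap.congr_fun hψ w
    have := h ψ (fun z hz => by
      simpa [hψW ⟨z, Submodule.subset_span hz⟩] using hφ ⟨z, Submodule.subset_span hz⟩ hz) y hy
    simp only [hψW, map_zero] at this
    linarith [φ.map_zero]
  intro q hq
  obtain ⟨s, hs, hmem⟩ :=
    isRelInternalPoint_of_mem_interior hint₁ ⟨q, Submodule.subset_span hq⟩ hq
  exact ⟨s, hs, by simpa [L₁] using hmem⟩

theorem NoProperSeparation.isRelInternalPoint [FiniteDimensional ℝ E] {K : Set E} {p : E}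
    (hK : Convex ℝ K) (hp : p ∈ K) (h : NoProperSeparation K p) : IsRelInternalPoint K p := by
  have hmem : ∀ y, y ∈ -p +ᵥ K ↔ p + y ∈ K := fun y => by
    simp [Set.mem_vadd_set_iff_neg_vadd_mem]
  have h₀ : NoProperSeparation (-p +ᵥ K) 0 := by
    intro ψ hψ y hy
    have hK' : ∀ x ∈ K, ψ p ≤ ψ x := fun x hx => by
      have := hψ (-p + x) ((hmem _).2 (by simpa using hx))
      simp only [map_zero, map_add, map_neg] at this
      linarith
    have := h ψ hK' (p + y) ((hmem y).1 hy)
    simp only [map_zero, map_add] at this ⊢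
    linarith
  intro q hq
  obtain ⟨s, hs, hsq⟩ := h₀.isRelInternalPoint_zero (hK.vadd _) ((hmem 0).2 (by simpa using hp))
    (-p + q) ((hmem _).2 (by simpa using hq))
  refine ⟨s, hs, ?_⟩
  convert (hmem _).1 hsq using 1
  module

end Topological

theorem IsCompact.exists_forall_two_mul_sub_mem {T : Set ℝ} (hT : IsCompact T)
    (hconv : Convex ℝ T) (hne : T.Nonempty) : ∃ α ∈ T, ∀ t ∈ T, 2 * α - t ∈ T := by
  obtain ⟨a, ha⟩ := hT.exists_isLeast hne
  obtain ⟨b, hb⟩ := hT.exists_isGreatest hne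
  have hab : Icc a b ⊆ T := hconv.ordConnected.out ha.1 hb.1
  refine ⟨(a + b) / 2, hab ⟨by linarith [ha.2 hb.1], by linarith [hb.2 ha.1]⟩,
    fun t ht => hab ⟨by linarith [hb.2 ht], by linarith [ha.2 ht]⟩⟩

theorem exists_isRelInternalPoint_fiber_init {k : ℕ} {K : Set (Fin (k + 1) → ℝ)}
    (hK : Convex ℝ K) (hKc : IsCompact K) {β : Fin k → ℝ} (hβ : β ∈ Fin.init '' K) :
    ∃ r ∈ K, Fin.init r = β ∧ IsRelInternalPoint {z ∈ K | Fin.init z = Fin.init r} r := by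
  set π : (Fin (k + 1) → ℝ) →ₗ[ℝ] (Fin k → ℝ) := LinearMap.funLeft ℝ ℝ Fin.castSucc
  set C := {z ∈ K | Fin.init z = β}
  have hC : Convex ℝ C := hK.inter ((convex_singleton β).linear_preimage π)
  have hCc : IsCompact C :=
    hKc.inter_right (isClosed_singleton.preimage (LinearMap.continuous_of_finiteDimensional π))
  obtain ⟨_, ⟨r, hrC, rfl⟩, hα⟩ :=
    (hCc.image (continuous_apply (Fin.last k))).exists_forall_two_mul_sub_mem
      (hC.linear_image (LinearMap.proj (Fin.last k))) ((show C.Nonempty from hβ).image _)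
  refine ⟨r, hrC.1, hrC.2, ?_⟩
  rw [hrC.2]
  intro z hz
  refine ⟨1, one_pos, ?_⟩
  obtain ⟨w, hwC, hw⟩ := hα _ (mem_image_of_mem _ hz)
  convert hwC using 1
  funext i
  refine Fin.lastCases ?_ (fun j => ?_) i
  · simp only [Pi.add_apply, Pi.sub_apply, one_smul] at hw ⊢
    linarith
  · have hrj : r j.castSucc = β j := congrFun hrC.2 j
    have hzj : z j.castSucc = β j := congrFun hz.2 j
    have hwj : w j.castSucc = β j := congrFun hwC.2 j
    simp only [Pi.add_apply, Pi.sub_apply, one_smul]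
    linarith

theorem exists_noProperSeparation_snoc {k : ℕ} {S : Set (Fin (k + 1) → ℝ)}
    (hS : Bornology.IsBounded S) (hne : S.Nonempty) {β : Fin k → ℝ}
    (hβ : NoProperSeparation (Fin.init '' S) β) : ∃ α, NoProperSeparation S (Fin.snoc β α) := by
  set π : (Fin (k + 1) → ℝ) →ₗ[ℝ] (Fin k → ℝ) := LinearMap.funLeft ℝ ℝ Fin.castSucc
  set K := closedConvexHull ℝ S
  have hπK : π '' K = closedConvexHull ℝ (Fin.init '' S) := π.image_closedConvexHull hS
  have hβK : β ∈ π '' K := hπK ▸ hβ.mem_closedConvexHull (hne.image _)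
  have hβrel : IsRelInternalPoint (π '' K) β := by
    rw [hπK] at hβK ⊢
    exact (noProperSeparation_closedConvexHull_iff.2 hβ).isRelInternalPoint
      convex_closedConvexHull hβK
  obtain ⟨r, -, hrβ, hr⟩ :=
    exists_isRelInternalPoint_fiber_init convex_closedConvexHull hS.isCompact_closedConvexHull hβK
  refine ⟨r (Fin.last k), ?_⟩
  rw [← hrβ, Fin.snoc_init_self, ← noProperSeparation_closedConvexHull_iff]
  rw [← hrβ] at hβrel
  exact (hβrel.of_image_of_fiber π convex_closedConvexHull hr).noProperSeparation

theorem strictlyCoherent_iff {n k : ℕ} {f : Fin k → (Fin n → ℝ) → ℝ} {β : Fin k → ℝ} :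
    StrictlyCoherent n k f β ↔ NoProperSeparation ((fun x i => f i x) '' cube n) β := by
  have hsum : ∀ σ x, ∑ i, σ i * (β i - f i x) =
      Fintype.linearCombination ℝ σ β - Fintype.linearCombination ℝ σ (fun i => f i x) := by
    intro σ x
    simp [Fintype.linearCombination_apply, mul_sub, Finset.sum_sub_distrib, mul_comm]
  have hsurj : ∀ ψ : (Fin k → ℝ) →ₗ[ℝ] ℝ, ∃ σ, Fintype.linearCombination ℝ σ = ψ :=
    fun ψ => ⟨fun i => ψ (Pi.single i 1), by ext i; simp⟩
  unfold StrictlyCoherent NoProperSeparation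
  simp only [hsum, forall_mem_image, Function.Surjective.forall hsurj]
  refine forall_congr' fun σ => ?_
  simp only [sub_neg, sub_pos]
  rw [← not_imp_not]
  push Not
  rfl

theorem stmt16_general (n k : ℕ) (f : Fin k → (Fin n → ℝ) → ℝ) (g : (Fin n → ℝ) → ℝ)
    (hf : ∀ i, IsMcNaughton n (f i)) (hg : IsMcNaughton n g)
    (hg0 : ∃ x ∈ cube n, g x ≠ 0) (hg1 : ∃ x ∈ cube n, g x ≠ 1)
    (β : Fin k → ℝ)
    (hcoh : StrictlyCoherent n k f β) :
    ∃ α : ℝ, 0 < α ∧ α < 1 ∧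
      StrictlyCoherent n (k + 1) (Fin.snoc f g) (Fin.snoc β α) := by
  set S := (fun x i => (Fin.snoc f g : Fin (k + 1) → (Fin n → ℝ) → ℝ) i x) '' cube n
  have hS : S ⊆ Icc 0 1 := by
    rintro _ ⟨x, hx, rfl⟩
    have h01 : ∀ i, (Fin.snoc f g : Fin (k + 1) → (Fin n → ℝ) → ℝ) i x ∈ Icc 0 1 := fun i =>
      Fin.lastCases (by simpa using hg.2.1 x hx) (fun j => by simpa using (hf j).2.1 x hx) i
    exact ⟨fun i => (h01 i).1, fun i => (h01 i).2⟩
  have hinit : Fin.init '' S = (fun x i => f i x) '' cube n := by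
    rw [image_image]
    exact image_congr fun x _ => funext fun i => by simp [Fin.init]
  obtain ⟨x₀, hx₀, hgx₀⟩ := hg0
  obtain ⟨x₁, hx₁, hgx₁⟩ := hg1
  obtain ⟨α, hα⟩ := exists_noProperSeparation_snoc ((Metric.isBounded_Icc 0 1).subset hS)
    ⟨_, mem_image_of_mem _ hx₀⟩ (hinit ▸ strictlyCoherent_iff.1 hcoh)
  refine ⟨α, ?_, ?_, strictlyCoherent_iff.2 hα⟩
  · simpa using hα.lt_of_forall_le (ψ := LinearMap.proj (Fin.last k)) (c := 0)
      (fun y hy => (hS hy).1 _) ⟨_, mem_image_of_mem _ hx₀, by simpa using hgx₀⟩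
  · simpa using hα.lt_of_forall_le (ψ := -LinearMap.proj (Fin.last k)) (c := -1)
      (fun y hy => by simpa using (hS hy).2 (Fin.last k))
      ⟨_, mem_image_of_mem _ hx₁, by simpa using hgx₁⟩

theorem stmt16 (n k : ℕ) (f : Fin k → (Fin n → ℝ) → ℝ) (g : (Fin n → ℝ) → ℝ)
    (hf : ∀ i, IsMcNaughton n (f i)) (hg : IsMcNaughton n g)
    (hg0 : ∃ x ∈ cube n, g x ≠ 0) (hg1 : ∃ x ∈ cube n, g x ≠ 1)
    (β : Fin k → ℝ) (hβ : ∀ i, β i ∈ Set.Icc (0 : ℝ) 1)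
    (hcoh : StrictlyCoherent n k f β) :
    ∃ α : ℝ, 0 < α ∧ α < 1 ∧
      StrictlyCoherent n (k + 1) (Fin.snoc f g) (Fin.snoc β α) :=
  stmt16_general n k f g hf hg hg0 hg1 β hcoh
end
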